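/- arXiv:2112.06328 — 6 statements merged into one kernel-verified Lean document; each statement's English description precedes it below -/
import Mathlib

section
/- For all integers n ≥ 0, d_2(3n+2) ≡ 0 (mod 3). -/
/-- `elongatedDiamond k n` (written `d_k(n)` in the paper) is the coefficient of `q^n` in the
formal power series `∏_{i ≥ 1} (1 - q^(2i))^k / ∏_{i ≥ 1} (1 - q^i)^(3k+1)`.
Since every factor with index `i > n` is congruent to `1` modulo `q^(n+1)`, this coefficient
equals the coefficient of `q^n` in the finite product over `1 ≤ i ≤ n`. -/
noncomputable def elongatedDiamond (k n : ℕ) : ℤ :=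
  PowerSeries.coeff (R := ℤ) n
    (∏ i ∈ Finset.Icc 1 n,
      ((1 - (PowerSeries.X : PowerSeries ℤ) ^ (2 * i)) ^ k *
        (PowerSeries.invOfUnit (1 - (PowerSeries.X : PowerSeries ℤ) ^ i) 1) ^ (3 * k + 1)))



noncomputable section AP
open PowerSeries Finset

abbrev R3 := ZMod 3
abbrev A := PowerSeries R3


lemma three_eq_zero : (3 : A) = 0 := by
  rw [← map_ofNat (C (R := R3)) 3, show ((3:R3) = 0) by decide, map_zero]

lemma cube_lemma (y : A) : (1 - y)^3 = 1 - y^3 := by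
  linear_combination (y^2 - y) * three_eq_zero

def tri : ℕ → ℕ
  | 0 => 0
  | (j+1) => tri j + (j+1)

lemma two_tri (j : ℕ) : 2 * tri j = j * (j+1) := by
  induction j with
  | zero => rfl
  | succ j ih => rw [tri, Nat.mul_add, ih]; ring

lemma tri_ge (j : ℕ) : j ≤ tri j := by
  induction j with
  | zero => simp
  | succ j ih => rw [tri]; omega

lemma tri_mod3 (j : ℕ) : tri j % 3 ≠ 2 := by
  induction j using Nat.strong_induction_on with
  | _ j ih =>
    match j, ih with
    | 0, _ => decide
    | 1, _ => decide
    | 2, _ => decide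
    | (j+3), ih =>
      have h := ih j (by omega)
      have : tri (j+3) = tri j + 3*j + 6 := by
        show tri j + (j+1) + (j+2) + (j+3) = _
        ring
      omega

lemma tri_add (a b : ℕ) : tri (a + b) = tri a + a * b + tri b := by
  induction b with
  | zero => simp [tri]
  | succ b ih => show tri (a+b) + (a+b+1) = _; rw [ih, tri]; ring

/-- Gaussian binomial: Pascal-recursion definition. -/
def gb : ℕ → ℕ → A
  | 0, 0 => 1
  | 0, (_+1) => 0
  | (_+1), 0 => 1
  | (m+1), (k+1) => gb m (k+1) + X^(m - k) * gb m k

lemma gb_succ_succ (m k : ℕ) :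
    gb (m+1) (k+1) = gb m (k+1) + X^(m-k) * gb m k := rfl

lemma gb_succ_zero (m : ℕ) : gb (m+1) 0 = 1 := rfl
lemma gb_zero_zero : gb 0 0 = 1 := rfl

lemma gb_zero : ∀ m k : ℕ, m < k → gb m k = 0 := by
  intro m
  induction m with
  | zero => intro k hk; match k, hk with | (k+1), _ => rfl
  | succ m ih =>
    intro k hk
    match k, hk with
    | (k+1), hk =>
      rw [gb_succ_succ, ih (k+1) (by omega), ih k (by omega)]
      ring

lemma gb_diag : ∀ m : ℕ, gb m m = 1 := by
  intro m
  induction m with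
  | zero => rfl
  | succ m ih =>
    rw [gb_succ_succ, gb_zero m (m+1) (by omega), ih, Nat.sub_self]
    ring

/-- `Pp a b = ∏_{a < i ≤ b} (1 - X^i)` -/
def Pp (a b : ℕ) : A := ∏ i ∈ Ioc a b, (1 - X^i)

lemma Pp_top (a b : ℕ) (h : a ≤ b) : Pp a (b+1) = Pp a b * (1 - X^(b+1)) := by
  rw [Pp, Pp, ← Finset.prod_Ioc_succ_top (by omega)]

lemma Pp_bot (a b : ℕ) (h : a < b) : Pp a b = (1 - X^(a+1)) * Pp (a+1) b := by
  rw [Pp, Pp, ← Finset.prod_Ioc_consecutive _ (show a ≤ a+1 by omega) (show a+1 ≤ b by omega)]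
  congr 1
  rw [Nat.Ioc_succ_singleton]
  simp

lemma Pp_self (a : ℕ) : Pp a a = 1 := by simp [Pp]

/-- key exact identity: `gb m k * (q;q)_k = ∏_{i=m-k+1}^{m} (1-X^i)`. -/
lemma gb_mul_Pp : ∀ m k : ℕ, k ≤ m → gb m k * Pp 0 k = Pp (m-k) m := by
  intro m
  induction m with
  | zero =>
    intro k hk
    interval_cases k
    simp [gb_zero_zero, Pp_self]
  | succ m ih =>
    intro k hk
    match k with
    | 0 => simp [gb_succ_zero, Pp_self, Pp]
    | (k+1) =>
      by_cases hkm : k + 1 ≤ m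
      · have f1 : Pp 0 (k+1) = Pp 0 k * (1 - X^(k+1)) := Pp_top 0 k (by omega)
        have f2 : Pp (m-(k+1)) m = (1 - X^(m-k)) * Pp (m-k) m := by
          have := Pp_bot (m-(k+1)) m (by omega)
          rwa [show m-(k+1)+1 = m-k by omega] at this
        have f4 : (X:A)^(m-k) * X^(k+1) = X^(m+1) := by
          rw [← pow_add]; congr 1; omega
        have e1 : gb m (k+1) * (Pp 0 k * (1 - X^(k+1))) = (1 - X^(m-k)) * Pp (m-k) m := by
          rw [← f1, ih (k+1) hkm, f2]
        have e2 : gb m k * Pp 0 k = Pp (m-k) m := ih k (by omega)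
        have f3 : Pp (m+1-(k+1)) (m+1) = Pp (m-k) m * (1 - X^(m+1)) := by
          rw [show m+1-(k+1) = m-k by omega]
          exact Pp_top _ _ (by omega)
        rw [gb_succ_succ, f1, f3]
        linear_combination e1 + (X^(m-k) * (1 - X^(k+1))) * e2 - Pp (m-k) m * f4
      · have hk1 : m = k := by omega
        subst hk1
        rw [gb_succ_succ, gb_zero m (m+1) (by omega), gb_diag, Nat.sub_self, Nat.sub_self]
        ring

def MOD (d : ℕ) (f g : A) : Prop := (X:A)^d ∣ (f - g)

namespace MOD
variable {d : ℕ} {f g h f' g' : A}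

lemma refl (f : A) : MOD d f f := by
  show (X:A)^d ∣ (f - f); simp

lemma symm (hfg : MOD d f g) : MOD d g f := by
  obtain ⟨c, hc⟩ := hfg; exact ⟨-c, by linear_combination -hc⟩

lemma trans (h1 : MOD d f g) (h2 : MOD d g h) : MOD d f h := by
  obtain ⟨c, hc⟩ := h1; obtain ⟨c', hc'⟩ := h2
  exact ⟨c + c', by linear_combination hc + hc'⟩

lemma add (h1 : MOD d f g) (h2 : MOD d f' g') : MOD d (f + f') (g + g') := by
  obtain ⟨c, hc⟩ := h1; obtain ⟨c', hc'⟩ := h2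
  exact ⟨c + c', by linear_combination hc + hc'⟩

lemma mul (h1 : MOD d f g) (h2 : MOD d f' g') : MOD d (f * f') (g * g') := by
  obtain ⟨c, hc⟩ := h1; obtain ⟨c', hc'⟩ := h2
  exact ⟨c * f' + g * c', by linear_combination f' * hc + g * hc'⟩

lemma of_eq (hfg : f = g) : MOD d f g := hfg ▸ MOD.refl f

lemma xpow {e : ℕ} (hde : d ≤ e) (f : A) : MOD d (X^e * f) 0 := by
  refine ⟨X^(e-d) * f, ?_⟩
  rw [sub_zero, ← mul_assoc, ← pow_add]
  congr 2
  omega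

lemma sum {ι : Type} (s : Finset ι) (F G : ι → A)
    (hFG : ∀ i ∈ s, MOD d (F i) (G i)) :
    MOD d (∑ i ∈ s, F i) (∑ i ∈ s, G i) := by
  classical
  induction s using Finset.induction_on with
  | empty => simpa using MOD.refl 0
  | @insert a s' hx ih =>
    rw [Finset.sum_insert hx, Finset.sum_insert hx]
    exact MOD.add (hFG a (by simp)) (ih (fun i hi => hFG i (by simp [hi])))

lemma prod {ι : Type} (s : Finset ι) (F G : ι → A)
    (hFG : ∀ i ∈ s, MOD d (F i) (G i)) :
    MOD d (∏ i ∈ s, F i) (∏ i ∈ s, G i) := by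
  classical
  induction s using Finset.induction_on with
  | empty => simpa using MOD.refl 1
  | @insert a s' hx ih =>
    rw [Finset.prod_insert hx, Finset.prod_insert hx]
    exact MOD.mul (hFG a (by simp)) (ih (fun i hi => hFG i (by simp [hi])))

lemma coeff_eq (hfg : MOD d f g) {a : ℕ} (ha : a < d) :
    PowerSeries.coeff (R := R3) a f = PowerSeries.coeff (R := R3) a g := by
  have := (PowerSeries.X_pow_dvd_iff).1 hfg a ha
  rw [map_sub] at this
  exact sub_eq_zero.1 this

end MOD

lemma gb_zero' : ∀ m : ℕ, gb m 0 = 1 := by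
  intro m; cases m
  · rfl
  · rfl

abbrev L := LaurentSeries R3

def phi : A →+* L := HahnSeries.ofPowerSeries ℤ R3

def Zl : L := phi X

lemma phi_X_pow (e : ℕ) : phi (X^e) = Zl^e := by rw [map_pow, Zl]

/-- the `q`-binomial theorem -/
lemma qbinom (z : L) : ∀ m : ℕ,
    ∏ k ∈ Icc 1 m, (1 + z * Zl^k)
      = ∑ k ∈ range (m+1), z^k * Zl^(tri k) * phi (gb m k) := by
  intro m
  induction m with
  | zero => simp [gb_zero_zero, tri]
  | succ m ih =>
    rw [Finset.prod_Icc_succ_top (by omega : 1 ≤ m+1), ih]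
    have hS1 : (∑ k ∈ range (m+1), z^k * Zl^(tri k) * phi (gb m k))
        = 1 + ∑ k ∈ range (m+1), z^(k+1) * Zl^(tri (k+1)) * phi (gb m (k+1)) := by
      rw [Finset.sum_range_succ' _ m, Finset.sum_range_succ
        (fun k => z^(k+1) * Zl^(tri (k+1)) * phi (gb m (k+1))) m]
      rw [gb_zero m (m+1) (by omega), gb_zero' m]
      simp [tri]
      ring
    have hS2 : (∑ k ∈ range (m+1), z^k * Zl^(tri k) * phi (gb m k)) * (z * Zl^(m+1))
        = ∑ k ∈ range (m+1), z^(k+1) * (Zl^(tri k + (k+1)) * (Zl^(m-k) * phi (gb m k))) := by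
      rw [Finset.sum_mul]
      refine Finset.sum_congr rfl (fun k hk => ?_)
      have hk' : k ≤ m := by simp at hk; omega
      obtain ⟨d, rfl⟩ : ∃ d, m = k + d := ⟨m-k, by omega⟩
      rw [show k+d-k = d by omega]
      simp only [pow_add, pow_succ]
      ring
    calc (∑ k ∈ range (m+1), z^k * Zl^(tri k) * phi (gb m k)) * (1 + z * Zl^(m+1))
        = (∑ k ∈ range (m+1), z^k * Zl^(tri k) * phi (gb m k))
          + (∑ k ∈ range (m+1), z^k * Zl^(tri k) * phi (gb m k)) * (z * Zl^(m+1)) := by ring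
      _ = 1 + ∑ k ∈ range (m+1), (z^(k+1) * Zl^(tri (k+1)) * phi (gb m (k+1))
            + z^(k+1) * (Zl^(tri k + (k+1)) * (Zl^(m-k) * phi (gb m k)))) := by
          rw [hS2, hS1, Finset.sum_add_distrib]; ring
      _ = ∑ k ∈ range (m+1+1), z^k * Zl^(tri k) * phi (gb (m+1) k) := by
          rw [Finset.sum_range_succ' (fun k => z^k * Zl^(tri k) * phi (gb (m+1) k)) (m+1)]
          rw [gb_succ_zero]
          simp only [pow_zero, one_mul, mul_one, map_one, tri]
          rw [add_comm (∑ k ∈ range (m+1), _) 1]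
          congr 1
          refine Finset.sum_congr rfl (fun k hk => ?_)
          rw [gb_succ_succ, map_add, map_mul, phi_X_pow]
          ring
set_option maxHeartbeats 2000000

def uZ : Lˣ := Units.mkOfMulEqOne Zl (HahnSeries.single (-1 : ℤ) (1:R3)) (by
  rw [Zl, phi, HahnSeries.ofPowerSeries_X, HahnSeries.single_mul_single]
  norm_num)

lemma uZ_val : (uZ : L) = Zl := rfl

lemma uZ_pow_val (a : ℕ) : ((uZ^a : Lˣ) : L) = Zl^a := by
  rw [Units.val_pow_eq_pow_val, uZ_val]

def eN (n k : ℕ) : ℕ := if n ≤ k then tri (k - n) else tri (n - k - 1)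

lemma tri_nsq (n : ℕ) : tri (n+1) + tri n = (n+1) * (n+1) := by
  have h2 := two_tri n
  have h1 : tri (n+1) = tri n + (n+1) := rfl
  ring_nf at h1 h2 ⊢
  linarith

lemma eN_eq (n k : ℕ) (hn : 1 ≤ n) : tri k + tri (n-1) = eN n k + n*k := by
  obtain ⟨m, rfl⟩ : ∃ m, n = m + 1 := ⟨n-1, by omega⟩
  rw [eN]
  simp only [Nat.add_sub_cancel]
  by_cases h : m + 1 ≤ k
  · obtain ⟨d, rfl⟩ : ∃ d, k = (m+1) + d := ⟨k - (m+1), by omega⟩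
    rw [if_pos h, show (m+1)+d - (m+1) = d by omega]
    have ha := tri_add (m+1) d
    have hs := tri_nsq m
    ring_nf at ha hs ⊢
    linarith
  · rw [if_neg h]
    obtain ⟨e, rfl⟩ : ∃ e, m = k + e := ⟨m - k, by omega⟩
    rw [show k + e + 1 - k - 1 = e by omega]
    have ha := tri_add k e
    have h2 := two_tri k
    ring_nf at ha h2 ⊢
    linarith

lemma sum_Ioc_id (m : ℕ) : ∑ k ∈ Ioc 0 m, k = tri m := by
  induction m with
  | zero => simp [tri]
  | succ m ih => rw [Finset.sum_Ioc_succ_top (by omega), ih]; rfl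

lemma sum_reflect (m : ℕ) : ∑ k ∈ Ioc 0 m, (m+1-k) = tri m := by
  rw [← sum_Ioc_id m]
  refine Finset.sum_nbij' (fun k => m+1-k) (fun k => m+1-k) ?_ ?_ ?_ ?_ ?_ <;>
    (intro a ha; simp only [Finset.mem_Ioc] at ha ⊢; try omega)

lemma prod_reflect (m : ℕ) (G : L) : ∏ k ∈ Ioc 0 m, (1 + G^(m+1-k)) = ∏ j ∈ Ioc 0 m, (1 + G^j) := by
  refine Finset.prod_nbij' (fun k => m+1-k) (fun k => m+1-k) ?_ ?_ ?_ ?_ ?_ <;>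
    (intro a ha; simp only [Finset.mem_Ioc] at ha ⊢; try omega)

/-- The key (finite bilateral Gauss-type) identity, in power series. -/
lemma key_identity (n : ℕ) (hn : 1 ≤ n) :
    (∏ j ∈ Ioc 0 (n-1), (1+X^j)) * ((1+1) * ∏ j ∈ Ioc 0 n, ((1:A)+X^j))
      = ∑ k ∈ range (2*n+1), X^(eN n k) * gb (2*n) k := by
  apply HahnSeries.ofPowerSeries_injective (Γ := ℤ) (R := R3)
  show phi _ = phi _
  set z : L := ((uZ⁻¹ ^ n : Lˣ) : L) with hz
  have hq := qbinom z (2*n)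
  have hphiL : phi ((∏ j ∈ Ioc 0 (n-1), (1+X^j)) * ((1+1) * ∏ j ∈ Ioc 0 n, ((1:A)+X^j)))
      = (∏ j ∈ Ioc 0 (n-1), (1+Zl^j)) * ((1+1) * ∏ j ∈ Ioc 0 n, ((1:L)+Zl^j)) := by
    rw [map_mul, map_mul, map_prod, map_prod, map_add, map_one]
    simp only [map_add, map_one, phi_X_pow]
  have hphiR : phi (∑ k ∈ range (2*n+1), X^(eN n k) * gb (2*n) k)
      = ∑ k ∈ range (2*n+1), Zl^(eN n k) * phi (gb (2*n) k) := by
    rw [map_sum]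
    exact Finset.sum_congr rfl (fun k hk => by rw [map_mul, phi_X_pow])
  rw [hphiL, hphiR]
  have hL : ((uZ^(tri (n-1)) : Lˣ) : L) * ∏ k ∈ Icc 1 (2*n), (1 + z * Zl^k)
      = (∏ j ∈ Ioc 0 (n-1), (1+Zl^j)) * ((1+1) * ∏ j ∈ Ioc 0 n, ((1:L)+Zl^j)) := by
    rw [show Finset.Icc 1 (2*n) = Finset.Ioc 0 (2*n) from by ext x; simp; omega]
    rw [← Finset.prod_Ioc_consecutive _ (show 0 ≤ n by omega) (show n ≤ 2*n by omega)]
    rw [← Finset.prod_Ioc_consecutive _ (show 0 ≤ n-1 by omega) (show n-1 ≤ n by omega)]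
    have hmid : Finset.Ioc (n-1) n = {n} := by ext x; simp; omega
    rw [hmid, Finset.prod_singleton]
    have hzn : z * Zl^n = 1 := by
      rw [hz, ← uZ_pow_val n, ← Units.val_mul,
        show uZ⁻¹^n * uZ^n = 1 from by group, Units.val_one]
    rw [hzn]
    have htop : ∏ k ∈ Finset.Ioc n (2*n), (1 + z * Zl^k) = ∏ j ∈ Ioc 0 n, ((1:L) + Zl^j) := by
      rw [show Finset.Ioc n (2*n) = Finset.Ioc (n+0) (n+n) from by ext x; simp; omega]
      rw [← Finset.map_add_left_Ioc, Finset.prod_map]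
      refine Finset.prod_congr rfl (fun j hj => ?_)
      have h1 : z * Zl^(addLeftEmbedding n j) = Zl^j := by
        show z * Zl^(n + j) = Zl^j
        rw [hz, ← uZ_pow_val (n+j), ← uZ_pow_val j, ← Units.val_mul,
          show uZ⁻¹^n * uZ^(n+j) = uZ^j from by group]
      rw [h1]
    rw [htop]
    have hbot : ∏ k ∈ Finset.Ioc 0 (n-1), (1 + z * Zl^k)
        = ((uZ⁻¹ : Lˣ) : L)^(tri (n-1)) * ∏ j ∈ Ioc 0 (n-1), ((1:L) + Zl^j) := by
      have step1 : ∀ k ∈ Finset.Ioc 0 (n-1), (1 + z * Zl^k)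
          = ((uZ⁻¹ : Lˣ) : L)^(n-k) * (1 + Zl^(n-k)) := by
        intro k hk
        simp only [Finset.mem_Ioc] at hk
        have hu1 : uZ⁻¹^n * uZ^k = uZ⁻¹^(n-k) := by
          obtain ⟨a, ha⟩ : ∃ a, n = k + a := ⟨n-k, by omega⟩
          rw [ha, show k + a - k = a by omega, pow_add]
          group
        have h1 : z * Zl^k = ((uZ⁻¹ : Lˣ) : L)^(n-k) := by
          rw [hz, ← uZ_pow_val k, ← Units.val_mul, hu1, Units.val_pow_eq_pow_val]
        rw [h1, mul_add, mul_one, ← Units.val_pow_eq_pow_val, ← uZ_pow_val (n-k),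
          ← Units.val_mul, show uZ⁻¹^(n-k) * uZ^(n-k) = 1 from by group,
          Units.val_one, add_comm]
      rw [Finset.prod_congr rfl step1, Finset.prod_mul_distrib]
      congr 1
      · rw [Finset.prod_pow_eq_pow_sum]
        congr 1
        rw [show (∑ k ∈ Ioc 0 (n-1), (n-k)) = ∑ k ∈ Ioc 0 (n-1), ((n-1)+1-k) from
          Finset.sum_congr rfl (fun k hk => by simp at hk; omega), sum_reflect]
      · rw [show (∏ k ∈ Ioc 0 (n-1), ((1:L) + Zl^(n-k))) = ∏ k ∈ Ioc 0 (n-1), ((1:L) + Zl^((n-1)+1-k)) from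
          Finset.prod_congr rfl (fun k hk => by simp at hk; congr 2; omega), prod_reflect]
    rw [hbot]
    have hcancel : ((uZ^(tri (n-1)) : Lˣ) : L) * ((uZ⁻¹ : Lˣ) : L)^(tri (n-1)) = 1 := by
      rw [← Units.val_pow_eq_pow_val, ← Units.val_mul,
        show uZ^(tri (n-1)) * uZ⁻¹^(tri (n-1)) = 1 from by group, Units.val_one]
    linear_combination ((∏ j ∈ Ioc 0 (n-1), ((1:L) + Zl^j)) *
      ((1+1) * ∏ j ∈ Ioc 0 n, ((1:L) + Zl^j))) * hcancel
  have hR : ((uZ^(tri (n-1)) : Lˣ) : L) * ∑ k ∈ range (2*n+1), z^k * Zl^(tri k) * phi (gb (2*n) k)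
      = ∑ k ∈ range (2*n+1), Zl^(eN n k) * phi (gb (2*n) k) := by
    rw [Finset.mul_sum]
    refine Finset.sum_congr rfl (fun k hk => ?_)
    have hunit : uZ^(tri (n-1)) * (uZ⁻¹^n)^k * uZ^(tri k) = uZ^(eN n k) := by
      have hee := eN_eq n k hn
      have h1 : (uZ⁻¹^n)^k = (uZ^(n*k))⁻¹ := by rw [← pow_mul, inv_pow]
      have h2 : uZ^(tri (n-1)) * uZ^(tri k) = uZ^(eN n k) * uZ^(n*k) := by
        rw [← pow_add, ← pow_add]; congr 1; omega
      calc uZ^(tri (n-1)) * (uZ⁻¹^n)^k * uZ^(tri k)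
          = (uZ^(tri (n-1)) * uZ^(tri k)) * (uZ^(n*k))⁻¹ := by rw [h1]; group
        _ = (uZ^(eN n k) * uZ^(n*k)) * (uZ^(n*k))⁻¹ := by rw [h2]
        _ = uZ^(eN n k) := by group
    calc ((uZ^(tri (n-1)) : Lˣ) : L) * (z^k * Zl^(tri k) * phi (gb (2*n) k))
        = (((uZ^(tri (n-1)) * (uZ⁻¹^n)^k * uZ^(tri k) : Lˣ)) : L) * phi (gb (2*n) k) := by
          rw [hz, Units.val_mul, Units.val_mul, Units.val_pow_eq_pow_val (uZ⁻¹^n), uZ_pow_val (tri k)]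
          ring
      _ = Zl^(eN n k) * phi (gb (2*n) k) := by rw [hunit, uZ_pow_val]
  rw [← hL, ← hR, hq]

def invQ (k : ℕ) : A := PowerSeries.invOfUnit (Pp 0 k) 1

lemma const_Pp (a b : ℕ) : constantCoeff (R := R3) (Pp a b) = 1 := by
  rw [Pp, map_prod]
  rw [Finset.prod_eq_one]
  intro i hi
  simp only [Finset.mem_Ioc] at hi
  rw [map_sub, map_one, map_pow, constantCoeff_X, zero_pow (by omega), sub_zero]

lemma Pp_mul_invQ (k : ℕ) : Pp 0 k * invQ k = 1 :=
  PowerSeries.mul_invOfUnit _ _ (by rw [const_Pp]; rfl)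

lemma MOD_xpow_zero {d e : ℕ} (h : d ≤ e) : MOD d ((X:A)^e) 0 := by
  have := MOD.xpow h (1 : A); rwa [mul_one] at this

lemma MOD_one_sub {d i : ℕ} (h : d ≤ i) : MOD d (1 - (X:A)^i) 1 := by
  refine ⟨-X^(i-d), ?_⟩
  have hx : (X:A)^d * X^(i-d) = X^i := by rw [← pow_add]; congr 1; omega
  linear_combination hx

lemma MOD_one_add {d i : ℕ} (h : d ≤ i) : MOD d (1 + (X:A)^i) 1 := by
  refine ⟨X^(i-d), ?_⟩
  have hx : (X:A)^d * X^(i-d) = X^i := by rw [← pow_add]; congr 1; omega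
  linear_combination -hx

lemma MOD_Pp_one {d a b : ℕ} (h : d ≤ a+1) : MOD d (Pp a b) 1 := by
  have := MOD.prod (Ioc a b) (fun i => 1 - X^i) (fun _ => (1:A))
    (fun i hi => MOD_one_sub (d := d) (by simp only [Finset.mem_Ioc] at hi; omega))
  simpa [Pp] using this

lemma gb_stab {d m k : ℕ} (hk : k ≤ m) (hd : d ≤ m - k + 1) : MOD d (gb m k) (invQ k) := by
  have e : gb m k = Pp (m-k) m * invQ k := by
    calc gb m k = gb m k * (Pp 0 k * invQ k) := by rw [Pp_mul_invQ, mul_one]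
      _ = (gb m k * Pp 0 k) * invQ k := by ring
      _ = Pp (m-k) m * invQ k := by rw [gb_mul_Pp m k hk]
  have h2 := MOD.mul (MOD_Pp_one (d := d) (a := m-k) (b := m) hd) (MOD.refl (invQ k))
  rw [one_mul] at h2
  exact MOD.trans (MOD.of_eq e) h2

lemma invQ_stab_le {d k k' : ℕ} (hd : d ≤ k+1) (hkk : k ≤ k') : MOD d (invQ k) (invQ k') := by
  have hsplit : Pp 0 k * Pp k k' = Pp 0 k' := Finset.prod_Ioc_consecutive _ (by omega) hkk
  have e : invQ k = Pp k k' * invQ k' := by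
    calc invQ k = invQ k * (Pp 0 k' * invQ k') := by rw [Pp_mul_invQ, mul_one]
      _ = (Pp 0 k * invQ k) * (Pp k k' * invQ k') := by rw [← hsplit]; ring
      _ = Pp k k' * invQ k' := by rw [Pp_mul_invQ, one_mul]
  have h2 := MOD.mul (MOD_Pp_one (d := d) (a := k) (b := k') hd) (MOD.refl (invQ k'))
  rw [one_mul] at h2
  exact MOD.trans (MOD.of_eq e) h2

lemma invQ_stab {d k k' : ℕ} (hd : d ≤ k+1) (hd' : d ≤ k'+1) : MOD d (invQ k) (invQ k') := by
  rcases le_total k k' with h | h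
  · exact invQ_stab_le hd h
  · exact (invQ_stab_le hd' h).symm

def TriS (M : ℕ) : A := ∑ j ∈ range M, X^(tri j)

lemma MOD_TriS_le {d M M' : ℕ} (h : d ≤ M) (hMM : M ≤ M') : MOD d (TriS M') (TriS M) := by
  have hsplit : (∑ j ∈ Finset.Ico 0 M, (X:A)^(tri j)) + ∑ j ∈ Finset.Ico M M', (X:A)^(tri j)
      = ∑ j ∈ Finset.Ico 0 M', (X:A)^(tri j) :=
    Finset.sum_Ico_consecutive _ (by omega) hMM
  have htail : MOD d (∑ j ∈ Finset.Ico M M', (X:A)^(tri j)) 0 := by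
    have := MOD.sum (d := d) (Finset.Ico M M') (fun j => (X:A)^(tri j)) (fun _ => 0)
      (fun j hj => by
        refine MOD_xpow_zero (d := d) ?_
        simp only [Finset.mem_Ico] at hj
        have := tri_ge j
        omega)
    simpa using this
  have : MOD d (TriS M') (TriS M + 0) := by
    rw [TriS, TriS, Finset.range_eq_Ico, Finset.range_eq_Ico, ← hsplit]
    exact MOD.add (MOD.refl _) htail
  simpa using this

lemma MOD_TriS {d M M' : ℕ} (h : d ≤ M) (h' : d ≤ M') : MOD d (TriS M) (TriS M') :=
  by rcases le_total M M' with hh | hh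
     · exact (MOD_TriS_le h hh).symm
     · exact MOD_TriS_le h' hh

lemma MOD_half {d : ℕ} {a b : A} (h : MOD d ((1+1)*a) ((1+1)*b)) : MOD d a b := by
  obtain ⟨c, hc⟩ := h
  exact ⟨(1+1)*c, by linear_combination 2*hc - (a-b)*three_eq_zero⟩

/-- Truncated Gauss identity. -/
lemma gauss_main (N : ℕ) :
    MOD (N+1) ((∏ j ∈ Ioc 0 N, ((1:A)+X^j))^2 * Pp 0 N) (TriS (N+1)) := by
  set d := N+1 with hd
  set n := 2*N+2 with hn
  have hkey := key_identity n (by omega)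
  have hPfac : ∀ a b : ℕ, N ≤ a → MOD d (∏ j ∈ Ioc a b, ((1:A)+X^j)) 1 := by
    intro a b ha
    have := MOD.prod (Ioc a b) (fun j => 1 + X^j) (fun _ => (1:A))
      (fun i hi => MOD_one_add (d := d) (by simp only [Finset.mem_Ioc] at hi; omega))
    simpa using this
  have hP1 : MOD d (∏ j ∈ Ioc 0 (n-1), ((1:A)+X^j)) (∏ j ∈ Ioc 0 N, ((1:A)+X^j)) := by
    have hsplit : (∏ j ∈ Ioc 0 N, ((1:A)+X^j)) * (∏ j ∈ Ioc N (n-1), ((1:A)+X^j))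
        = ∏ j ∈ Ioc 0 (n-1), ((1:A)+X^j) := Finset.prod_Ioc_consecutive _ (by omega) (by omega)
    have h2 := MOD.mul (MOD.refl (∏ j ∈ Ioc 0 N, ((1:A)+X^j))) (hPfac N (n-1) le_rfl)
    rw [mul_one] at h2
    exact MOD.trans (MOD.of_eq hsplit.symm) h2
  have hP2 : MOD d (∏ j ∈ Ioc 0 n, ((1:A)+X^j)) (∏ j ∈ Ioc 0 N, ((1:A)+X^j)) := by
    have hsplit : (∏ j ∈ Ioc 0 N, ((1:A)+X^j)) * (∏ j ∈ Ioc N n, ((1:A)+X^j))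
        = ∏ j ∈ Ioc 0 n, ((1:A)+X^j) := Finset.prod_Ioc_consecutive _ (by omega) (by omega)
    have h2 := MOD.mul (MOD.refl (∏ j ∈ Ioc 0 N, ((1:A)+X^j))) (hPfac N n le_rfl)
    rw [mul_one] at h2
    exact MOD.trans (MOD.of_eq hsplit.symm) h2
  -- termwise replacement of gb by invQ N in the sum
  have hterm : ∀ k ∈ range (2*n+1), MOD d (X^(eN n k) * gb (2*n) k) (X^(eN n k) * invQ N) := by
    intro k hk
    simp only [Finset.mem_range] at hk
    by_cases he : d ≤ eN n k
    · exact MOD.trans (MOD.xpow he _) (MOD.symm (MOD.xpow he _))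
    · have heN : eN n k ≤ N := by omega
      have hbounds : N ≤ k ∧ k ≤ 2*n ∧ N+1 ≤ 2*n - k + 1 := by
        rw [eN] at heN
        by_cases hnk : n ≤ k
        · rw [if_pos hnk] at heN
          have := tri_ge (k - n)
          omega
        · rw [if_neg hnk] at heN
          have := tri_ge (n - k - 1)
          omega
      refine MOD.mul (MOD.refl _) ?_
      exact MOD.trans (gb_stab hbounds.2.1 hbounds.2.2) (invQ_stab (by omega) (by omega))
  have hsum1 : MOD d (∑ k ∈ range (2*n+1), X^(eN n k) * gb (2*n) k)
      ((∑ k ∈ range (2*n+1), (X:A)^(eN n k)) * invQ N) := by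
    have := MOD.sum (range (2*n+1)) _ _ hterm
    rw [← Finset.sum_mul] at this
    exact this
  -- evaluate the exponent sum
  have hexp : (∑ k ∈ range (2*n+1), (X:A)^(eN n k)) = TriS n + TriS (n+1) := by
    rw [Finset.range_eq_Ico,
      ← Finset.sum_Ico_consecutive _ (show 0 ≤ n by omega) (show n ≤ 2*n+1 by omega)]
    congr 1
    · -- lower: k < n
      rw [TriS, Finset.range_eq_Ico]
      have step : ∀ k ∈ Finset.Ico 0 n, (X:A)^(eN n k) = X^(tri (n-k-1)) := by
        intro k hk
        simp only [Finset.mem_Ico] at hk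
        rw [eN, if_neg (by omega)]
      rw [Finset.sum_congr rfl step]
      refine Finset.sum_nbij' (fun k => n-1-k) (fun k => n-1-k) ?_ ?_ ?_ ?_ ?_ <;>
        (intro a ha; simp only [Finset.mem_Ico] at ha ⊢; try omega)
      congr 2
      omega
    · -- upper: n ≤ k ≤ 2n
      rw [show 2*n+1 = n + (n+1) by ring, show Finset.Ico n (n+(n+1)) = Finset.Ico (n+0) (n+(n+1)) by rw [Nat.add_zero],
        ← Finset.map_add_left_Ico, Finset.sum_map]
      rw [TriS, Finset.range_eq_Ico]
      refine Finset.sum_congr rfl (fun j hj => ?_)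
      show (X:A)^(eN n (n+j)) = X^(tri j)
      rw [eN, if_pos (by omega), show n+j-n = j by omega]
  -- assemble
  have hchain : MOD d ((∏ j ∈ Ioc 0 N, ((1:A)+X^j)) * ((1+1) * ∏ j ∈ Ioc 0 N, ((1:A)+X^j)))
      ((TriS (N+1) + TriS (N+1)) * invQ N) := by
    refine MOD.trans (MOD.mul hP1.symm (MOD.mul (MOD.refl (1+1)) hP2.symm)) ?_
    refine MOD.trans (MOD.of_eq hkey) ?_
    refine MOD.trans hsum1 ?_
    rw [hexp]
    exact MOD.mul (MOD.add (MOD_TriS (by omega) (by omega)) (MOD_TriS (by omega) (by omega)))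
      (MOD.refl (invQ N))
  have hfin : MOD d ((1+1) * ((∏ j ∈ Ioc 0 N, ((1:A)+X^j)) * (∏ j ∈ Ioc 0 N, ((1:A)+X^j))))
      ((1+1) * (invQ N * TriS (N+1))) := by
    refine MOD.trans (MOD.of_eq (by ring)) (MOD.trans hchain (MOD.of_eq (by ring)))
  have h5 := MOD.mul (MOD_half hfin) (MOD.refl (Pp 0 N))
  refine MOD.trans (MOD.of_eq (by ring)) (MOD.trans h5 (MOD.of_eq ?_))
  rw [show (invQ N * TriS (N+1)) * Pp 0 N = TriS (N+1) * (Pp 0 N * invQ N) by ring,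
    Pp_mul_invQ, mul_one]


/-- support contained in multiples of 3 -/
def S3 (f : A) : Prop := ∀ e : ℕ, e % 3 ≠ 0 → PowerSeries.coeff (R := R3) e f = 0

lemma S3_mul {f g : A} (hf : S3 f) (hg : S3 g) : S3 (f * g) := by
  intro e he
  rw [PowerSeries.coeff_mul]
  refine Finset.sum_eq_zero (fun p hp => ?_)
  rw [Finset.HasAntidiagonal.mem_antidiagonal] at hp
  by_cases ha : p.1 % 3 = 0
  · rw [hg p.2 (by omega), mul_zero]
  · rw [hf p.1 ha, zero_mul]

lemma S3_prod {ι : Type} (s : Finset ι) (F : ι → A) (hF : ∀ i ∈ s, S3 (F i)) :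
    S3 (∏ i ∈ s, F i) := by
  classical
  induction s using Finset.induction_on with
  | empty =>
    intro e he
    rw [Finset.prod_empty, PowerSeries.coeff_one, if_neg (by omega)]
  | @insert a s' hx ih =>
    rw [Finset.prod_insert hx]
    exact S3_mul (hF a (by simp)) (ih (fun i hi => hF i (by simp [hi])))

lemma S3_inv {f g : A} (hfg : f * g = 1) (hf : S3 f) (hf0 : PowerSeries.constantCoeff (R := R3) f = 1) :
    S3 g := by
  intro e he
  induction e using Nat.strong_induction_on with
  | _ e ih =>
  have h1 : PowerSeries.coeff (R := R3) e (f * g) = 0 := by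
    rw [hfg, PowerSeries.coeff_one, if_neg (by omega)]
  rw [PowerSeries.coeff_mul] at h1
  have h2 : ∑ p ∈ Finset.HasAntidiagonal.antidiagonal e, PowerSeries.coeff (R := R3) p.1 f * PowerSeries.coeff (R := R3) p.2 g
      = PowerSeries.coeff (R := R3) 0 f * PowerSeries.coeff (R := R3) e g := by
    refine Finset.sum_eq_single_of_mem (0, e) (by simp) (fun p hp hne => ?_)
    rw [Finset.HasAntidiagonal.mem_antidiagonal] at hp
    by_cases ha : p.1 = 0
    · exfalso
      apply hne
      have : p.2 = e := by omega
      rw [← ha, ← this]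
    · by_cases ha3 : p.1 % 3 = 0
      · rw [ih p.2 (by omega) (by omega), mul_zero]
      · rw [hf p.1 ha3, zero_mul]
  have hf0' : PowerSeries.coeff (R := R3) 0 f = 1 := by
    rw [PowerSeries.coeff_zero_eq_constantCoeff]; exact hf0
  rw [h2, hf0', one_mul] at h1
  exact h1

def f3 : ℤ →+* R3 := Int.castRingHom (ZMod 3)

def Jf (i : ℕ) : A := PowerSeries.map f3 (PowerSeries.invOfUnit (1 - X^i) 1)

def Ki (i : ℕ) : A := PowerSeries.invOfUnit (1 - X^(3*i)) 1

lemma hJf (i : ℕ) (hi : 1 ≤ i) : ((1:A) - X^i) * Jf i = 1 := by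
  have hz : ((1 : PowerSeries ℤ) - X^i) * PowerSeries.invOfUnit (1 - X^i) 1 = 1 := by
    refine PowerSeries.mul_invOfUnit _ _ ?_
    rw [map_sub, map_one, map_pow, constantCoeff_X, zero_pow (by omega), sub_zero, Units.val_one]
  have h2 := congrArg (PowerSeries.map f3) hz
  rw [map_mul, map_one, map_sub, map_one, map_pow, PowerSeries.map_X] at h2
  exact h2

lemma hKi (i : ℕ) (hi : 1 ≤ i) : ((1:A) - X^(3*i)) * Ki i = 1 := by
  refine PowerSeries.mul_invOfUnit _ _ ?_
  rw [map_sub, map_one, map_pow, constantCoeff_X, zero_pow (by omega), sub_zero, Units.val_one]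

lemma S3_Ki (i : ℕ) (hi : 1 ≤ i) : S3 (Ki i) := by
  refine S3_inv (hKi i hi) ?_ ?_
  · intro e he
    rw [map_sub, PowerSeries.coeff_one, PowerSeries.coeff_X_pow, if_neg (by omega),
      if_neg (by omega), sub_zero]
  · rw [map_sub, map_one, map_pow, constantCoeff_X, zero_pow (by omega), sub_zero]

theorem d2_mod3 (n : ℕ) : (3 : ℤ) ∣ elongatedDiamond 2 (3 * n + 2) := by
  set N := 3 * n + 2 with hN
  have h0 : ((elongatedDiamond 2 N : ℤ) : ZMod 3) = 0 := by
    simp only [elongatedDiamond]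
    have hcast : (PowerSeries.coeff (R := R3) N) (PowerSeries.map f3
        (∏ i ∈ Finset.Icc 1 N,
          ((1 - (PowerSeries.X : PowerSeries ℤ) ^ (2 * i)) ^ 2 *
            (PowerSeries.invOfUnit (1 - (PowerSeries.X : PowerSeries ℤ) ^ i) 1) ^ (3 * 2 + 1))))
        = (((PowerSeries.coeff (R := ℤ) N) (∏ i ∈ Finset.Icc 1 N,
          ((1 - (PowerSeries.X : PowerSeries ℤ) ^ (2 * i)) ^ 2 *
            (PowerSeries.invOfUnit (1 - (PowerSeries.X : PowerSeries ℤ) ^ i) 1) ^ (3 * 2 + 1))) : ℤ) : ZMod 3) :=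
      PowerSeries.coeff_map (f := f3) N _
    rw [← hcast]
    have hIN : Finset.Icc 1 N = Finset.Ioc 0 N := by ext x; simp; omega
    have hFmap : PowerSeries.map f3 (∏ i ∈ Finset.Icc 1 N,
          ((1 - (PowerSeries.X : PowerSeries ℤ) ^ (2 * i)) ^ 2 *
            (PowerSeries.invOfUnit (1 - (PowerSeries.X : PowerSeries ℤ) ^ i) 1) ^ (3 * 2 + 1)))
        = ∏ i ∈ Ioc 0 N, (((1:A) - X^(2*i))^2 * (Jf i)^(3*2+1)) := by
      rw [map_prod]
      refine Finset.prod_congr hIN (fun i hi => ?_)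
      rw [map_mul, map_pow, map_sub, map_one, map_pow, PowerSeries.map_X, map_pow]
      rfl
    rw [hFmap]
    -- structural identity
    have hstruct : (∏ i ∈ Ioc 0 N, (((1:A) - X^(2*i))^2 * (Jf i)^(3*2+1)))
        = ((∏ j ∈ Ioc 0 N, ((1:A)+X^j))^2 * Pp 0 N) * (∏ i ∈ Ioc 0 N, (Ki i)^2) := by
      have hDJ : (∏ i ∈ Ioc 0 N, ((1:A) - X^i)^7) * (∏ i ∈ Ioc 0 N, (Jf i)^7) = 1 := by
        rw [← Finset.prod_mul_distrib]
        refine Finset.prod_eq_one (fun i hi => ?_)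
        rw [← mul_pow, hJf i (by simp only [Finset.mem_Ioc] at hi; omega), one_pow]
      have hL : (∏ i ∈ Ioc 0 N, (((1:A) - X^(2*i))^2 * (Jf i)^(3*2+1)))
            * (∏ i ∈ Ioc 0 N, ((1:A) - X^i)^7)
          = ∏ i ∈ Ioc 0 N, ((1:A) - X^(2*i))^2 := by
        rw [← Finset.prod_mul_distrib]
        refine Finset.prod_congr rfl (fun i hi => ?_)
        have hi1 : 1 ≤ i := by simp only [Finset.mem_Ioc] at hi; omega
        calc ((1:A) - X^(2*i))^2 * (Jf i)^(3*2+1) * ((1:A) - X^i)^7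
            = ((1:A) - X^(2*i))^2 * (((1:A) - X^i) * Jf i)^7 := by ring
          _ = ((1:A) - X^(2*i))^2 := by rw [hJf i hi1, one_pow, mul_one]
      have hR : (((∏ j ∈ Ioc 0 N, ((1:A)+X^j))^2 * Pp 0 N) * (∏ i ∈ Ioc 0 N, (Ki i)^2))
            * (∏ i ∈ Ioc 0 N, ((1:A) - X^i)^7)
          = ∏ i ∈ Ioc 0 N, ((1:A) - X^(2*i))^2 := by
        rw [Pp, ← Finset.prod_pow, ← Finset.prod_mul_distrib, ← Finset.prod_mul_distrib,
          ← Finset.prod_mul_distrib]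
        refine Finset.prod_congr rfl (fun i hi => ?_)
        have hi1 : 1 ≤ i := by simp only [Finset.mem_Ioc] at hi; omega
        have hxx : (X:A)^i * X^i = X^(2*i) := by rw [← pow_add]; congr 1; omega
        have hsq : ((1:A)+X^i) * ((1:A)-X^i) = (1:A) - X^(2*i) := by linear_combination -hxx
        have hx3 : ((X:A)^i)^3 = X^(3*i) := by rw [← pow_mul]; congr 1; omega
        have hcube : ((1:A) - X^i)^3 = (1:A) - X^(3*i) := by rw [cube_lemma, hx3]
        calc ((1:A)+X^i)^2 * ((1:A)-X^i) * (Ki i)^2 * ((1:A) - X^i)^7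
            = (((1:A)+X^i) * ((1:A)-X^i))^2 * (((1:A)-X^i)^3)^2 * (Ki i)^2 := by ring
          _ = ((1:A) - X^(2*i))^2 * (((1:A) - X^(3*i)) * Ki i)^2 := by rw [hsq, hcube]; ring
          _ = ((1:A) - X^(2*i))^2 := by rw [hKi i hi1, one_pow, mul_one]
      have := hL.trans hR.symm
      calc (∏ i ∈ Ioc 0 N, (((1:A) - X^(2*i))^2 * (Jf i)^(3*2+1)))
          = (∏ i ∈ Ioc 0 N, (((1:A) - X^(2*i))^2 * (Jf i)^(3*2+1)))
            * ((∏ i ∈ Ioc 0 N, ((1:A) - X^i)^7) * (∏ i ∈ Ioc 0 N, (Jf i)^7)) := by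
            rw [hDJ, mul_one]
        _ = ((∏ i ∈ Ioc 0 N, (((1:A) - X^(2*i))^2 * (Jf i)^(3*2+1)))
            * (∏ i ∈ Ioc 0 N, ((1:A) - X^i)^7)) * (∏ i ∈ Ioc 0 N, (Jf i)^7) := by ring
        _ = ((((∏ j ∈ Ioc 0 N, ((1:A)+X^j))^2 * Pp 0 N) * (∏ i ∈ Ioc 0 N, (Ki i)^2))
            * (∏ i ∈ Ioc 0 N, ((1:A) - X^i)^7)) * (∏ i ∈ Ioc 0 N, (Jf i)^7) := by
            rw [this]
        _ = (((∏ j ∈ Ioc 0 N, ((1:A)+X^j))^2 * Pp 0 N) * (∏ i ∈ Ioc 0 N, (Ki i)^2))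
            * ((∏ i ∈ Ioc 0 N, ((1:A) - X^i)^7) * (∏ i ∈ Ioc 0 N, (Jf i)^7)) := by ring
        _ = ((∏ j ∈ Ioc 0 N, ((1:A)+X^j))^2 * Pp 0 N) * (∏ i ∈ Ioc 0 N, (Ki i)^2) := by
            rw [hDJ, mul_one]
    rw [hstruct]
    -- coefficient extraction
    have hC : S3 (∏ i ∈ Ioc 0 N, (Ki i)^2) := by
      refine S3_prod _ _ (fun i hi => ?_)
      have hi1 : 1 ≤ i := by simp only [Finset.mem_Ioc] at hi; omega
      rw [pow_two]
      exact S3_mul (S3_Ki i hi1) (S3_Ki i hi1)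
    have hPsi : ∀ a : ℕ, a ≤ N → a % 3 = 2 →
        PowerSeries.coeff (R := R3) a ((∏ j ∈ Ioc 0 N, ((1:A)+X^j))^2 * Pp 0 N) = 0 := by
      intro a ha ha3
      rw [ MOD.coeff_eq (gauss_main N) (by omega)]
      rw [TriS, map_sum]
      refine Finset.sum_eq_zero (fun j hj => ?_)
      rw [PowerSeries.coeff_X_pow, if_neg ?_]
      have := tri_mod3 j
      omega
    rw [PowerSeries.coeff_mul]
    refine Finset.sum_eq_zero (fun p hp => ?_)
    rw [Finset.HasAntidiagonal.mem_antidiagonal] at hp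
    by_cases hb : p.2 % 3 = 0
    · rw [hPsi p.1 (by omega) (by omega), zero_mul]
    · rw [hC p.2 hb, mul_zero]
  exact_mod_cast (ZMod.intCast_zmod_eq_zero_iff_dvd _ 3).mp h0
end AP
end

section
/- For all integers n ≥ 0, d_3(2n+1) ≡ 0 (mod 2). -/
/-!
Modulo 2 we have `1 - q^(2i) = (1 - q^i)^2`, so the generating function of `d_k` reduces to
`∏ (1 - q^i)^(-(k+1))`. For odd `k` this is a square, and a square of a power series in
characteristic 2 has no odd powers of `q`.
-/

open PowerSeries Finset

namespace PowerSeries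

variable {R : Type*} [CommRing R] [CharP R 2]

/-- The cross terms `f_a f_b` and `f_b f_a` cancel in pairs, and an odd index has no diagonal term. -/
theorem coeff_sq_eq_zero_of_odd (f : R⟦X⟧) {m : ℕ} (hm : Odd m) : coeff m (f ^ 2) = 0 := by
  rw [sq, coeff_mul]
  refine sum_involution (fun p _ => p.swap) (fun p _ => ?_) (fun p hp _ hfix => ?_)
    (fun p hp => ?_) (fun _ _ => rfl)
  · rw [Prod.fst_swap, Prod.snd_swap, mul_comm]
    exact CharTwo.add_self_eq_zero _
  · rw [HasAntidiagonal.mem_antidiagonal] at hp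
    have : p.2 = p.1 := congrArg Prod.fst hfix
    obtain ⟨t, ht⟩ := hm
    omega
  · rw [HasAntidiagonal.mem_antidiagonal] at hp ⊢
    rw [Prod.fst_swap, Prod.snd_swap, add_comm, hp]

theorem one_sub_X_pow_sq (i : ℕ) : ((1 : R⟦X⟧) - X ^ i) ^ 2 = 1 - X ^ (2 * i) := by
  have h2 : (2 : R⟦X⟧) = 0 := by
    rw [← map_ofNat (C (R := R)) 2, CharTwo.two_eq_zero, map_zero]
  linear_combination (X ^ (2 * i) - X ^ i : R⟦X⟧) * h2

end PowerSeries

theorem pow_two_mul_mul_pow_eq_of_mul_eq_one {M : Type*} [CommMonoid M] {a v : M} (h : a * v = 1)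
    (k : ℕ) : a ^ (2 * k) * v ^ (3 * k + 1) = v ^ (k + 1) := by
  rw [show 3 * k + 1 = 2 * k + (k + 1) by ring, pow_add, ← mul_assoc, ← mul_pow, h, one_pow,
    one_mul]

theorem elongatedDiamond_cast_zmod_two (k n : ℕ) :
    (elongatedDiamond k n : ZMod 2) = coeff n ((∏ i ∈ Icc 1 n,
      map (Int.castRingHom (ZMod 2)) (invOfUnit (1 - X ^ i) 1)) ^ (k + 1)) := by
  rw [elongatedDiamond, ← prod_pow, ← eq_intCast (Int.castRingHom (ZMod 2)), ← coeff_map,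
    map_prod]
  congr 1
  refine prod_congr rfl fun i hi => ?_
  have hi : i ≠ 0 := by rw [mem_Icc] at hi; omega
  have hinv : ((1 : (ZMod 2)⟦X⟧) - X ^ i) *
      map (Int.castRingHom (ZMod 2)) (invOfUnit (1 - X ^ i) 1) = 1 := by
    have h := mul_invOfUnit (1 - X ^ i : ℤ⟦X⟧) 1 (by simp [zero_pow hi])
    simpa using congrArg (map (Int.castRingHom (ZMod 2))) h
  rw [map_mul, map_pow, map_pow, map_sub, map_one, map_pow, map_X, ← one_sub_X_pow_sq, ← pow_mul,
    pow_two_mul_mul_pow_eq_of_mul_eq_one hinv]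

theorem two_dvd_elongatedDiamond {k m : ℕ} (hk : Odd k) (hm : Odd m) :
    (2 : ℤ) ∣ elongatedDiamond k m := by
  obtain ⟨j, rfl⟩ := hk
  refine (ZMod.intCast_zmod_eq_zero_iff_dvd _ 2).mp ?_
  rw [elongatedDiamond_cast_zmod_two, show 2 * j + 1 + 1 = (j + 1) * 2 by ring, pow_mul]
  exact coeff_sq_eq_zero_of_odd _ hm

theorem d3_mod2 (n : ℕ) : (2 : ℤ) ∣ elongatedDiamond 3 (2 * n + 1) :=
  two_dvd_elongatedDiamond (by decide) (odd_two_mul_add_one n)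
end

section
/- For all integers n ≥ 0, d_3(4n+2) ≡ 0 (mod 2). -/
open PowerSeries

namespace PowerSeries

variable {R : Type*} [CommRing R]

instance instCharP (p : ℕ) [CharP R p] : CharP R⟦X⟧ p :=
  charP_of_injective_ringHom (C_injective (R := R)) p

theorem coeff_pow_expChar_pow_of_not_dvd {p : ℕ} [ExpChar R p] (f : R⟦X⟧) {a m : ℕ}
    (hm : ¬ p ^ a ∣ m) : coeff m (f ^ p ^ a) = 0 := by
  have hp := expChar_ne_zero R p
  rw [← MvPowerSeries.map_iterateFrobenius_expand p hp f a]
  change iterateFrobenius R p a (coeff m (expand (p ^ a) (pow_ne_zero a hp) f)) = 0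
  rw [coeff_expand_of_not_dvd _ _ _ hm, map_zero]

theorem one_sub_X_pow_two_mul [CharP R 2] (i : ℕ) :
    (1 - X ^ (2 * i) : R⟦X⟧) = (1 - X ^ i) ^ 2 := by
  rw [sub_pow_char, one_pow, ← pow_mul, mul_comm]

theorem one_sub_X_pow_mul_map_invOfUnit {S : Type*} [CommRing S] (f : R →+* S) {i : ℕ}
    (hi : 0 < i) : (1 - X ^ i) * map f (invOfUnit (1 - X ^ i) 1) = 1 := by
  have h : (1 - X ^ i : R⟦X⟧) * invOfUnit (1 - X ^ i) 1 = 1 :=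
    mul_invOfUnit _ _ (by simp [zero_pow hi.ne'])
  simpa using congrArg (map f) h

end PowerSeries

theorem pow_two_pow_mul_pow_eq_of_mul_eq_one {M : Type*} [CommMonoid M] {u g : M}
    (h : u * g = 1) (k : ℕ) : (u ^ 2) ^ k * g ^ (3 * k + 1) = g ^ (k + 1) := by
  calc (u ^ 2) ^ k * g ^ (3 * k + 1) = (u * g) ^ (2 * k) * g ^ (k + 1) := by
        rw [mul_pow, ← pow_mul, mul_assoc, ← pow_add, show 2 * k + (k + 1) = 3 * k + 1 by ring]
    _ = g ^ (k + 1) := by rw [h, one_pow, one_mul]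

theorem intCast_elongatedDiamond {R : Type*} [CommRing R] [CharP R 2] (k n : ℕ) :
    (elongatedDiamond k n : R) = coeff n
      ((∏ i ∈ Finset.Icc 1 n, map (Int.castRingHom R) (invOfUnit (1 - X ^ i) 1)) ^ (k + 1)) := by
  rw [elongatedDiamond, ← eq_intCast (Int.castRingHom R), ← coeff_map, map_prod, ← Finset.prod_pow]
  congr 1
  refine Finset.prod_congr rfl fun i hmem => ?_
  have hi : 0 < i := (Finset.mem_Icc.mp hmem).1
  rw [map_mul, map_pow, map_pow, map_sub, map_one, map_pow, map_X, one_sub_X_pow_two_mul]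
  exact pow_two_pow_mul_pow_eq_of_mul_eq_one (one_sub_X_pow_mul_map_invOfUnit _ hi) k

theorem two_dvd_elongatedDiamond_s2 {k a n : ℕ} (hk : 2 ^ a ∣ k + 1) (hn : ¬ 2 ^ a ∣ n) :
    2 ∣ elongatedDiamond k n := by
  obtain ⟨m, hm⟩ := hk
  refine (ZMod.intCast_zmod_eq_zero_iff_dvd _ 2).mp ?_
  rw [intCast_elongatedDiamond, hm, mul_comm, pow_mul]
  exact coeff_pow_expChar_pow_of_not_dvd _ hn

theorem d3_mod2_4n2 (n : ℕ) : (2 : ℤ) ∣ elongatedDiamond 3 (4 * n + 2) :=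
  two_dvd_elongatedDiamond_s2 (a := 2) dvd_rfl (by omega)
end

section
/- For all integers n ≥ 0, d_3(4n+3) ≡ 0 (mod 4). -/
open PowerSeries Finset

lemma Nat.not_isSquare_of_mod_four_eq_three {b : ℕ} (hb : b % 4 = 3) : ¬ IsSquare b := by
  rintro ⟨r, rfl⟩
  have : r % 4 < 4 := Nat.mod_lt _ (by norm_num)
  rw [Nat.mul_mod] at hb
  interval_cases r % 4 <;> omega

lemma Nat.even_card_divisors_of_not_isSquare {b : ℕ} (hb : ¬ IsSquare b) :
    Even b.divisors.card := by
  rw [← ZMod.natCast_eq_zero_iff_even, card_eq_sum_ones, Nat.cast_sum, Nat.cast_one]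
  refine sum_involution (fun d _ => b / d) (fun _ _ => by decide) ?_ ?_ ?_
  · intro d hd _ h
    exact hb ⟨d, Nat.eq_mul_of_div_eq_right (Nat.dvd_of_mem_divisors hd) h⟩
  · intro d hd
    exact Nat.mem_divisors.2
      ⟨Nat.div_dvd_of_dvd (Nat.dvd_of_mem_divisors hd), (Nat.mem_divisors.1 hd).2⟩
  · intro d hd
    exact Nat.div_div_self (Nat.dvd_of_mem_divisors hd) (Nat.mem_divisors.1 hd).2

lemma Nat.le_and_two_mul_dvd_sub_iff_dvd {b i : ℕ} (hb : Odd b) :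
    (i ≤ b ∧ 2 * i ∣ b - i) ↔ i ∣ b := by
  constructor
  · rintro ⟨hib, m, hm⟩
    exact ⟨2 * m + 1, by rw [← Nat.sub_add_cancel hib, hm]; ring⟩
  · rintro ⟨k, rfl⟩
    obtain ⟨m, rfl⟩ := (Nat.odd_mul.mp hb).2
    refine ⟨Nat.le_mul_of_pos_right i (by omega), m, ?_⟩
    rw [Nat.mul_add, Nat.mul_one, Nat.add_sub_cancel]
    ring

section CharFour

variable {R : Type*} [CommRing R]

lemma Finset.prod_one_add_two_mul_of_four_eq_zero (h4 : (4 : R) = 0) {ι : Type*}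
    (s : Finset ι) (t : ι → R) : ∏ i ∈ s, (1 + 2 * t i) = 1 + 2 * ∑ i ∈ s, t i := by
  classical
  induction s using Finset.induction_on with
  | empty => simp
  | insert a s ha ih =>
    rw [prod_insert ha, ih, sum_insert ha]
    linear_combination (t a * ∑ i ∈ s, t i) * h4

-- The middle step is the congruence `(1 - x²)⁴ (1 - x⁴) ≡ (1 - x)¹⁰ (1 + 2x - x²) (mod 4)`.
lemma one_sub_sq_pow_three_mul_pow_ten_of_four_eq_zero (h4 : (4 : R) = 0) {x a b e : R}
    (ha : (1 - x) * a = 1) (hb : (1 - x ^ 2) * b = 1) (he : (1 - x ^ 4) * e = 1) :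
    (1 - x ^ 2) ^ 3 * a ^ 10 = e * (1 + 2 * (x * b)) :=
  calc (1 - x ^ 2) ^ 3 * a ^ 10 = (1 - x ^ 2) ^ 4 * (1 - x ^ 4) * a ^ 10 * b * e := by
        linear_combination (-(1 - x ^ 2) ^ 3 * a ^ 10) * hb
          + (-(1 - x ^ 2) ^ 3 * a ^ 10 * ((1 - x ^ 2) * b)) * he
    _ = ((1 - x) * a) ^ 10 * (1 + 2 * x - x ^ 2) * b * e := by
        linear_combination (2 * x - 7 * x ^ 2 + 5 * x ^ 3 + 20 * x ^ 4 - 72 * x ^ 5 + 126 * x ^ 6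
          - 138 * x ^ 7 + 100 * x ^ 8 - 50 * x ^ 9 + 17 * x ^ 10 - 3 * x ^ 11) * a ^ 10 * b * e * h4
    _ = e * (1 + 2 * (x * b)) := by
        rw [ha, one_pow]
        linear_combination e * hb

lemma two_mul_card_divisors_eq_zero (h4 : (4 : R) = 0) {b : ℕ} (hb : b % 4 = 3) :
    2 * (b.divisors.card : R) = 0 := by
  obtain ⟨c, hc⟩ :=
    Nat.even_card_divisors_of_not_isSquare (Nat.not_isSquare_of_mod_four_eq_three hb)
  rw [hc, Nat.cast_add]
  linear_combination (c : R) * h4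

end CharFour

namespace PowerSeries

variable {A B : Type*} [CommRing A] [CommRing B]

variable (A) in
noncomputable def invOneSubXPow (m : ℕ) : A⟦X⟧ :=
  mk fun j => if m ∣ j then 1 else 0

@[simp]
lemma coeff_invOneSubXPow (m j : ℕ) :
    coeff j (invOneSubXPow A m) = if m ∣ j then 1 else 0 :=
  coeff_mk _ _

lemma one_sub_X_pow_mul_invOneSubXPow {m : ℕ} (hm : 0 < m) :
    (1 - X ^ m) * invOneSubXPow A m = 1 := by
  ext j
  rw [sub_mul, one_mul, map_sub, mul_comm, coeff_mul_X_pow', coeff_invOneSubXPow, coeff_one]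
  rcases lt_or_ge j m with hjm | hmj
  · have hdvd : m ∣ j ↔ j = 0 :=
      ⟨fun h => Nat.eq_zero_of_dvd_of_lt h hjm, by rintro rfl; exact dvd_zero m⟩
    simp [hjm.not_ge, hdvd]
  · simp [hmj, Nat.dvd_sub_iff_left hmj dvd_rfl, (hm.trans_le hmj).ne']

lemma invOfUnit_one_sub_X_pow {m : ℕ} (hm : 0 < m) :
    invOfUnit (1 - X ^ m : A⟦X⟧) 1 = invOneSubXPow A m :=
  left_inv_eq_right_inv (invOfUnit_mul _ _ (by simp [hm.ne']))
    (one_sub_X_pow_mul_invOneSubXPow hm)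

@[simp]
lemma map_invOneSubXPow (φ : A →+* B) (m : ℕ) :
    map φ (invOneSubXPow A m) = invOneSubXPow B m := by
  ext j
  simp [apply_ite φ]

lemma coeff_mul_eq_zero_of_not_dvd {d : ℕ} {f g : A⟦X⟧}
    (hf : ∀ m, ¬ d ∣ m → coeff m f = 0) (hg : ∀ m, ¬ d ∣ m → coeff m g = 0)
    {m : ℕ} (hm : ¬ d ∣ m) : coeff m (f * g) = 0 := by
  rw [coeff_mul]
  refine sum_eq_zero fun p hp => ?_
  rw [HasAntidiagonal.mem_antidiagonal] at hp
  by_cases hp1 : d ∣ p.1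
  · have hp2 : ¬ d ∣ p.2 := fun h => hm (hp ▸ dvd_add hp1 h)
    rw [hg _ hp2, mul_zero]
  · rw [hf _ hp1, zero_mul]

lemma coeff_prod_eq_zero_of_not_dvd {ι : Type*} {d : ℕ} (s : Finset ι) {f : ι → A⟦X⟧}
    (hf : ∀ i ∈ s, ∀ m, ¬ d ∣ m → coeff m (f i) = 0) {m : ℕ} (hm : ¬ d ∣ m) :
    coeff m (∏ i ∈ s, f i) = 0 := by
  classical
  induction s using Finset.induction_on generalizing m with
  | empty => simp [coeff_one, show m ≠ 0 by rintro rfl; exact hm (dvd_zero d)]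
  | insert a s ha ih =>
    rw [prod_insert ha]
    exact coeff_mul_eq_zero_of_not_dvd (hf a (mem_insert_self a s))
      (fun m hm => ih (fun i hi => hf i (mem_insert_of_mem hi)) hm) hm

-- `∑ qⁱ / (1 - q²ⁱ) = ∑ₙ #{d ∣ n | n / d odd} qⁿ`, and for odd `n` every divisor qualifies.
lemma coeff_sum_X_pow_mul_invOneSubXPow_two_mul {b N : ℕ} (hb : Odd b) (hbN : b ≤ N) :
    coeff b (∑ i ∈ Icc 1 N, (X : A⟦X⟧) ^ i * invOneSubXPow A (2 * i)) = b.divisors.card := by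
  have hterm : ∀ i ∈ Icc 1 N,
      coeff b ((X : A⟦X⟧) ^ i * invOneSubXPow A (2 * i)) = if i ∣ b then 1 else 0 := by
    intro i _
    simp only [coeff_X_pow_mul', coeff_invOneSubXPow, ← Nat.le_and_two_mul_dvd_sub_iff_dvd hb]
    split_ifs <;> simp_all
  rw [map_sum, sum_congr rfl hterm, sum_boole]
  congr 2
  ext i
  simp only [mem_filter, mem_Icc, Nat.mem_divisors]
  refine ⟨fun ⟨_, hi⟩ => ⟨hi, hb.pos.ne'⟩, fun ⟨hi, _⟩ => ⟨⟨?_, ?_⟩, hi⟩⟩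
  · exact Nat.pos_of_dvd_of_pos hi hb.pos
  · exact (Nat.le_of_dvd hb.pos hi).trans hbN

end PowerSeries

section

variable {A : Type*} [CommRing A]

variable (A) in
noncomputable def elongatedDiamondProduct (k N : ℕ) : A⟦X⟧ :=
  ∏ i ∈ Icc 1 N, (1 - X ^ (2 * i)) ^ k * invOneSubXPow A i ^ (3 * k + 1)

lemma intCast_elongatedDiamond_s3 (k n : ℕ) :
    (elongatedDiamond k n : A) = coeff n (elongatedDiamondProduct A k n) := by
  rw [elongatedDiamond, ← eq_intCast (Int.castRingHom A), ← coeff_map, map_prod]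
  refine congrArg _ (prod_congr rfl fun i hi => ?_)
  rw [invOfUnit_one_sub_X_pow (mem_Icc.1 hi).1]
  simp

lemma elongatedDiamondProduct_three_eq (h4 : (4 : A) = 0) (N : ℕ) :
    elongatedDiamondProduct A 3 N = (∏ i ∈ Icc 1 N, invOneSubXPow A (4 * i)) *
      (1 + 2 * ∑ i ∈ Icc 1 N, X ^ i * invOneSubXPow A (2 * i)) := by
  have h4' : (4 : A⟦X⟧) = 0 := by rw [← map_ofNat C 4, h4, map_zero]
  rw [elongatedDiamondProduct, ← prod_one_add_two_mul_of_four_eq_zero h4', ← prod_mul_distrib]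
  refine prod_congr rfl fun i hi => ?_
  have hi : 0 < i := (mem_Icc.1 hi).1
  have hG (c : ℕ) (hc : 0 < c) : (1 - (X ^ i) ^ c) * invOneSubXPow A (c * i) = 1 := by
    rw [← pow_mul']
    exact one_sub_X_pow_mul_invOneSubXPow (Nat.mul_pos hc hi)
  have key := one_sub_sq_pow_three_mul_pow_ten_of_four_eq_zero h4'
    (by simpa using hG 1 one_pos) (hG 2 two_pos) (hG 4 four_pos)
  rwa [← pow_mul'] at key

lemma coeff_elongatedDiamondProduct_three_eq_zero (h4 : (4 : A) = 0) {b N : ℕ}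
    (hb : b % 4 = 3) (hbN : b ≤ N) : coeff b (elongatedDiamondProduct A 3 N) = 0 := by
  set Z := ∏ i ∈ Icc 1 N, invOneSubXPow A (4 * i)
  have hZ : ∀ m, ¬ 4 ∣ m → coeff m Z = 0 := fun m hm =>
    coeff_prod_eq_zero_of_not_dvd _ (fun i _ m hm => by
      rw [coeff_invOneSubXPow, if_neg fun h => hm ((dvd_mul_right 4 i).trans h)]) hm
  rw [elongatedDiamondProduct_three_eq h4, mul_add, mul_one, mul_left_comm, map_add,
    hZ b (by omega), zero_add, ← map_ofNat C 2, coeff_C_mul, coeff_mul, mul_sum]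
  refine sum_eq_zero fun p hp => ?_
  rw [HasAntidiagonal.mem_antidiagonal] at hp
  by_cases hp1 : 4 ∣ p.1
  · have hp2 : p.2 % 4 = 3 := by omega
    rw [mul_left_comm, coeff_sum_X_pow_mul_invOneSubXPow_two_mul (Nat.odd_iff.2 (by omega))
      (by omega), two_mul_card_divisors_eq_zero h4 hp2, mul_zero]
  · rw [hZ _ hp1, zero_mul, mul_zero]

end

theorem d3_mod4 (n : ℕ) : (4 : ℤ) ∣ elongatedDiamond 3 (4 * n + 3) := by
  have h := coeff_elongatedDiamondProduct_three_eq_zero (A := ZMod 4) rfl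
    (b := 4 * n + 3) (by omega) le_rfl
  rw [← intCast_elongatedDiamond_s3, ZMod.intCast_zmod_eq_zero_iff_dvd] at h
  exact_mod_cast h
end

section
/- Let ℓ be a prime and let r be an integer with 1 ≤ r ≤ ℓ-1 such that p(ℓn+r) ≡ 0 (mod ℓ) for all integers n ≥ 0, where p(m) denotes the number of unrestricted partitions of m. Then for all integers n ≥ 0, d_ℓ(ℓn+r) ≡ 0 (mod ℓ). -/
/-!
Modulo `ℓ`, the product defining `d_ℓ` factors as `F ^ ℓ * P`, where `P = ∏ (1 - q^i)⁻¹` is the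
partition generating function. Since `x ↦ x ^ ℓ` is the Frobenius in characteristic `ℓ`, `F ^ ℓ`
only has monomials of degree divisible by `ℓ`, so the coefficient of `q^(ℓn+r)` in `F ^ ℓ * P` is
a combination of the values `p(ℓm+r)`, all of which vanish modulo `ℓ`.
-/

open PowerSeries PowerSeries.WithPiTopology Finset

theorem PowerSeries.tsum_X_pow_mul_eq_invOfUnit {R : Type*} [CommRing R] [TopologicalSpace R]
    [IsTopologicalRing R] [T2Space R] {i : ℕ} (hi : i ≠ 0) :
    ∑' j : ℕ, (X : R⟦X⟧) ^ (i * j) = invOfUnit (1 - X ^ i) 1 := by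
  have hX : constantCoeff ((X : R⟦X⟧) ^ i) = 0 := by simp [zero_pow hi]
  refine left_inv_eq_right_inv ?_ (mul_invOfUnit _ _ (by simp [hX]))
  simp_rw [pow_mul]
  exact tsum_pow_mul_one_sub_of_constantCoeff_eq_zero hX

theorem Nat.Partition.card_eq_coeff_prod_invOfUnit {R : Type*} [CommRing R] {n N : ℕ}
    (hn : n ≤ N) :
    (Fintype.card n.Partition : R) =
      coeff n (∏ i ∈ Icc 1 N, invOfUnit (1 - (X : R⟦X⟧) ^ i) 1) := by
  -- Mathlib's generating function is an infinite product, so give `R` the discrete topology and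
  -- restrict to parts `≤ N`, which leaves only finitely many nontrivial factors.
  let _ : TopologicalSpace R := ⊥
  have _ : DiscreteTopology R := ⟨rfl⟩
  have hprod := (hasProd_powerSeriesMk_card_restricted R (· ≤ N)).tprod_eq
  rw [tprod_eq_prod (s := range N) fun i hi => if_neg (by simpa using hi)] at hprod
  have hall : restricted n (· ≤ N) = univ :=
    filter_true_of_mem fun p _ _ hm => (le_of_mem_parts hm).trans hn
  rw [← Finset.card_univ, ← hall, ← coeff_mk n fun n ↦ (#(restricted n (· ≤ N)) : R), ← hprod,
    ← Ico_add_one_right_eq_Icc, ← zero_add 1, ← prod_Ico_add', Nat.Ico_zero_eq_range]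
  congr 1
  refine prod_congr rfl fun i hi => ?_
  rw [if_pos (by simp at hi; omega)]
  exact tsum_X_pow_mul_eq_invOfUnit i.succ_ne_zero

theorem PowerSeries.coeff_pow_expChar_of_not_dvd {R : Type*} [CommRing R] (p : ℕ) [ExpChar R p]
    (f : R⟦X⟧) {n : ℕ} (hn : ¬ p ∣ n) : coeff n (f ^ p) = 0 := by
  rw [← MvPowerSeries.map_frobenius_expand p (expChar_ne_zero R p)]
  change frobenius R p (coeff n (expand p (expChar_ne_zero R p) f)) = 0
  rw [coeff_expand_of_not_dvd _ _ _ hn, map_zero]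

theorem PowerSeries.coeff_pow_expChar_mul_eq_zero {R : Type*} [CommRing R] {p : ℕ} [ExpChar R p]
    {r n : ℕ} (hr : r < p) (f : R⟦X⟧) {g : R⟦X⟧} (hg : ∀ m ≤ n, coeff (p * m + r) g = 0) :
    coeff (p * n + r) (f ^ p * g) = 0 := by
  rw [coeff_mul]
  refine sum_eq_zero fun ⟨a, b⟩ hab => ?_
  rw [HasAntidiagonal.mem_antidiagonal] at hab
  by_cases ha : p ∣ a
  · obtain ⟨k, rfl⟩ := ha
    have hkn : k ≤ n := by
      by_contra! h
      nlinarith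
    have hb : b = p * (n - k) + r := by
      rw [Nat.mul_sub]
      have := Nat.mul_le_mul_left p hkn
      omega
    rw [hb, hg _ (Nat.sub_le n k), mul_zero]
  · rw [coeff_pow_expChar_of_not_dvd p f ha, zero_mul]

theorem d_ell_from_partition_general (ℓ : ℕ) (hℓ : Nat.Prime ℓ) (r : ℕ)
    (hr2 : r ≤ ℓ - 1)
    (hp : ∀ n : ℕ, ℓ ∣ Fintype.card (Nat.Partition (ℓ * n + r))) :
    ∀ n : ℕ, (ℓ : ℤ) ∣ elongatedDiamond ℓ (ℓ * n + r) := by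
  intro n
  have := Fact.mk hℓ
  set N := ℓ * n + r
  set P : ℤ⟦X⟧ := ∏ i ∈ Icc 1 N, invOfUnit (1 - X ^ i) 1
  set F : ℤ⟦X⟧ := ∏ i ∈ Icc 1 N, (1 - X ^ (2 * i)) * invOfUnit (1 - X ^ i) 1 ^ 3
  have hsplit : ∏ i ∈ Icc 1 N, ((1 - X ^ (2 * i)) ^ ℓ * invOfUnit (1 - X ^ i) 1 ^ (3 * ℓ + 1)) =
      F ^ ℓ * P := by
    rw [← prod_pow, ← prod_mul_distrib]
    exact prod_congr rfl fun i _ => by rw [mul_pow, ← pow_mul, pow_succ, mul_comm 3]; ring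
  have hP : ∀ m ≤ n, coeff (ℓ * m + r) (map (Int.castRingHom (ZMod ℓ)) P) = 0 := fun m hm => by
    rw [coeff_map, eq_intCast, ← Nat.Partition.card_eq_coeff_prod_invOfUnit
      (Nat.add_le_add_right (Nat.mul_le_mul_left ℓ hm) r), Int.cast_natCast,
      ZMod.natCast_eq_zero_iff]
    exact hp m
  rw [← ZMod.intCast_zmod_eq_zero_iff_dvd, elongatedDiamond, hsplit,
    ← eq_intCast (Int.castRingHom _), ← coeff_map, map_mul, map_pow]
  exact coeff_pow_expChar_mul_eq_zero (by have := hℓ.two_le; omega) _ hP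

theorem d_ell_from_partition (ℓ : ℕ) (hℓ : Nat.Prime ℓ) (r : ℕ) (hr1 : 1 ≤ r)
    (hr2 : r ≤ ℓ - 1)
    (hp : ∀ n : ℕ, ℓ ∣ Fintype.card (Nat.Partition (ℓ * n + r))) :
    ∀ n : ℕ, (ℓ : ℤ) ∣ elongatedDiamond ℓ (ℓ * n + r) :=
  d_ell_from_partition_general ℓ hℓ r hr2 hp
end

section
/- For all integers n ≥ 0: d_8(3n+2) ≡ 0 (mod 9) and d_8(9n+3) ≡ 0 (mod 9). -/
namespace D8
open Finset

variable {A : Type*} [CommRing A]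

/-- Gaussian binomial `[a+b choose b]_y` (partitions in an `a × b` box). -/
def gb (y : A) : ℕ → ℕ → A
  | _, 0 => 1
  | 0, _+1 => 1
  | a+1, b+1 => gb y (a+1) b + y^(b+1) * gb y a (b+1)
termination_by a b => a + b

@[simp] lemma gb_zero_right (y : A) (a : ℕ) : gb y a 0 = 1 := by
  cases a <;> simp [gb]

@[simp] lemma gb_zero_left (y : A) (b : ℕ) : gb y 0 b = 1 := by
  cases b <;> simp [gb]

lemma gb_succ (y : A) (a b : ℕ) :
    gb y (a+1) (b+1) = gb y (a+1) b + y^(b+1) * gb y a (b+1) := by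
  rw [gb]

lemma gb_cross (y : A) : ∀ a b : ℕ,
    (1 - y^(a+1)) * gb y (a+1) b = (1 - y^(b+1)) * gb y a (b+1) := by
  intro a
  induction a with
  | zero =>
    -- (1-y) * gb y 1 b = (1 - y^(b+1)) * 1
    intro b
    induction b with
    | zero => simp
    | succ b ih =>
      rw [gb_succ]
      simp only [gb_zero_left] at *
      ring_nf
      ring_nf at ih
      linear_combination ih
  | succ a iha =>
    intro b
    induction b with
    | zero =>
      have h0 := iha 0
      rw [gb_succ]
      simp only [gb_zero_right] at *
      linear_combination y * h0
    | succ b ihb =>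
      have h1 := ihb
      have h2 := iha (b+1)
      rw [gb_succ y (a+1) b, gb_succ y a (b+1)]
      linear_combination h1 + y^(b+2) * h2

lemma gb_pascal2 (y : A) (a b : ℕ) :
    gb y (a+1) (b+1) = gb y a (b+1) + y^(a+1) * gb y (a+1) b := by
  rw [gb_succ]
  linear_combination gb_cross y a b

lemma gb_symm (y : A) : ∀ a b : ℕ, gb y a b = gb y b a := by
  intro a
  induction a with
  | zero => intro b; simp
  | succ a iha =>
    intro b
    induction b with
    | zero => simp
    | succ b ihb =>
      rw [gb_succ, gb_pascal2 y b a, ihb, iha (b+1)]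

/-- products of the form `1 + y^s * w` -/
lemma prod_one_sub_pow (y : A) (s t : ℕ) (hs : 1 ≤ s) :
    ∃ w : A, ∏ i ∈ Icc s t, (1 - y^i) = 1 + y^s * w := by
  classical
  refine Finset.prod_induction _ (fun f => ∃ w, f = 1 + y^s * w) ?_ ⟨0, by ring⟩ ?_
  · rintro f g ⟨u, hu⟩ ⟨v, hv⟩
    exact ⟨u + v + y^s*u*v, by rw [hu, hv]; ring⟩
  · intro i hi
    rw [mem_Icc] at hi
    refine ⟨-y^(i-s), ?_⟩
    have e : y^s * y^(i-s) = y^i := by rw [← pow_add, Nat.add_sub_cancel' hi.1]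
    linear_combination e

lemma gb_box (y : A) : ∀ a b : ℕ,
    ∃ h : A, (∏ i ∈ Icc 1 b, (1 - y^i)) * gb y a b = 1 + y^(a+1) * h := by
  intro a
  induction a with
  | zero =>
    intro b
    obtain ⟨w, hw⟩ := prod_one_sub_pow y 1 b le_rfl
    exact ⟨w, by simp [hw, pow_one]⟩
  | succ a iha =>
    intro b
    induction b with
    | zero => exact ⟨0, by simp⟩
    | succ b ihb =>
      obtain ⟨h1, hh1⟩ := ihb
      obtain ⟨h2, hh2⟩ := iha (b+1)
      refine ⟨(1 - y^(b+1))*h1 + y^b * h2, ?_⟩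
      rw [Finset.prod_Icc_succ_top (by omega), gb_succ]
      have e : y^(a+2) * ((1 - y^(b+1))*h1 + y^b*h2)
          = (1-y^(b+1)) * (y^(a+2)*h1) + y^(b+1) * (y^(a+1)*h2) := by ring
      calc (∏ i ∈ Icc 1 b, (1 - y^i)) * (1 - y^(b+1)) *
            (gb y (a+1) b + y^(b+1) * gb y a (b+1))
          = (1 - y^(b+1)) * ((∏ i ∈ Icc 1 b, (1 - y^i)) * gb y (a+1) b)
            + y^(b+1) * ((∏ i ∈ Icc 1 (b+1), (1 - y^i)) * gb y a (b+1)) := by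
            rw [Finset.prod_Icc_succ_top (by omega)]; ring
        _ = (1 - y^(b+1)) * (1 + y^(a+2)*h1) + y^(b+1) * (1 + y^(a+1)*h2) := by
            rw [hh1, hh2]
        _ = 1 + y^(a+2) * ((1 - y^(b+1))*h1 + y^b*h2) := by
            rw [e]; ring

def gbz (y : A) (a b : ℤ) : A := if 0 ≤ a ∧ 0 ≤ b then gb y a.toNat b.toNat else 0

def Bn (y : A) (m : ℕ) (k : ℤ) : A := gbz y (m - k) k

lemma Bn_of_neg (y : A) {m : ℕ} {k : ℤ} (h : k < 0) : Bn y m k = 0 := by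
  unfold Bn gbz
  rw [if_neg]; omega

lemma Bn_of_gt (y : A) {m : ℕ} {k : ℤ} (h : (m:ℤ) < k) : Bn y m k = 0 := by
  unfold Bn gbz
  rw [if_neg]; omega

lemma Bn_eq_gb (y : A) (m j : ℕ) (h : j ≤ m) : Bn y m (j:ℤ) = gb y (m - j) j := by
  unfold Bn gbz
  rw [if_pos ⟨by omega, by omega⟩]
  congr 1 <;> omega

lemma Bn_last (y : A) (m : ℕ) : Bn y m (m:ℤ) = 1 := by
  rw [Bn_eq_gb y m m le_rfl]; simp

lemma Bn_zero (y : A) (m : ℕ) : Bn y m (0:ℤ) = 1 := by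
  rw [show (0:ℤ) = ((0:ℕ):ℤ) by simp, Bn_eq_gb y m 0 (Nat.zero_le _)]; simp

lemma pascalB1 (y : A) (m : ℕ) (k : ℤ) (h0 : 0 ≤ k) (h1 : k ≤ m+1) :
    Bn y (m+1) k = Bn y m (k-1) + y^(k.toNat) * Bn y m k := by
  obtain ⟨kn, rfl⟩ : ∃ kn : ℕ, k = kn := ⟨k.toNat, (Int.toNat_of_nonneg h0).symm⟩
  match kn with
  | 0 =>
    have e1 : Bn y m ((0:ℕ) - 1 : ℤ) = 0 := Bn_of_neg y (by omega)
    have e2 : Bn y m ((0:ℕ):ℤ) = gb y (m - 0) 0 := Bn_eq_gb y m 0 (by omega)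
    have e3 : Bn y (m+1) ((0:ℕ):ℤ) = gb y (m+1-0) 0 := Bn_eq_gb y (m+1) 0 (by omega)
    rw [e1, e2, e3]; simp
  | kn+1 =>
    have hk : kn + 1 ≤ m + 1 := by exact_mod_cast h1
    have e0 : ((kn+1:ℕ):ℤ) - 1 = (kn:ℤ) := by push_cast; ring
    have eL : Bn y (m+1) ((kn+1:ℕ):ℤ) = gb y (m+1-(kn+1)) (kn+1) := Bn_eq_gb y (m+1) (kn+1) hk
    have e1 : Bn y m (((kn+1:ℕ):ℤ) - 1) = gb y (m - kn) kn := by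
      rw [e0, Bn_eq_gb y m kn (by omega)]
    have etn : (((kn+1:ℕ)):ℤ).toNat = kn+1 := by omega
    rcases Nat.lt_or_ge kn m with hlt | hge
    · -- kn + 1 ≤ m
      have e2 : Bn y m ((kn+1:ℕ):ℤ) = gb y (m-(kn+1)) (kn+1) := Bn_eq_gb y m (kn+1) (by omega)
      rw [eL, e1, e2, etn]
      obtain ⟨a, ha⟩ : ∃ a, m - kn = a + 1 := ⟨m - kn - 1, by omega⟩
      have h2 : m + 1 - (kn+1) = a + 1 := by omega
      have h3 : m - (kn+1) = a := by omega
      rw [h2, h3, gb_succ y a kn, ha]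
    · -- kn = m (since kn+1 ≤ m+1)
      have hkm : kn = m := by omega
      subst hkm
      have e2 : Bn y kn ((kn+1:ℕ):ℤ) = 0 := Bn_of_gt y (by push_cast; omega)
      rw [eL, e1, e2, etn]
      simp [Nat.sub_self]

lemma pascalB2 (y : A) (m : ℕ) (k : ℤ) (h0 : 0 ≤ k) (h1 : k ≤ m+1) :
    Bn y (m+1) k = Bn y m k + y^(((m:ℤ)+1-k).toNat) * Bn y m (k-1) := by
  obtain ⟨kn, rfl⟩ : ∃ kn : ℕ, k = kn := ⟨k.toNat, (Int.toNat_of_nonneg h0).symm⟩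
  match kn with
  | 0 =>
    have e1 : Bn y m ((0:ℕ) - 1 : ℤ) = 0 := Bn_of_neg y (by omega)
    have e2 : Bn y m ((0:ℕ):ℤ) = gb y (m - 0) 0 := Bn_eq_gb y m 0 (by omega)
    have e3 : Bn y (m+1) ((0:ℕ):ℤ) = gb y (m+1-0) 0 := Bn_eq_gb y (m+1) 0 (by omega)
    rw [e1, e2, e3]; simp
  | kn+1 =>
    have hk : kn + 1 ≤ m + 1 := by exact_mod_cast h1
    have e0 : ((kn+1:ℕ):ℤ) - 1 = (kn:ℤ) := by push_cast; ring
    have eL : Bn y (m+1) ((kn+1:ℕ):ℤ) = gb y (m+1-(kn+1)) (kn+1) := Bn_eq_gb y (m+1) (kn+1) hk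
    have e1 : Bn y m (((kn+1:ℕ):ℤ) - 1) = gb y (m - kn) kn := by
      rw [e0, Bn_eq_gb y m kn (by omega)]
    have etn : ((m:ℤ)+1-((kn+1:ℕ):ℤ)).toNat = m - kn := by omega
    rcases Nat.lt_or_ge kn m with hlt | hge
    · have e2 : Bn y m ((kn+1:ℕ):ℤ) = gb y (m-(kn+1)) (kn+1) := Bn_eq_gb y m (kn+1) (by omega)
      rw [eL, e1, e2, etn]
      obtain ⟨a, ha⟩ : ∃ a, m - kn = a + 1 := ⟨m - kn - 1, by omega⟩
      have h2 : m + 1 - (kn+1) = a + 1 := by omega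
      have h3 : m - (kn+1) = a := by omega
      rw [h2, h3, ha]
      exact gb_pascal2 y a kn
    · have hkm : kn = m := by omega
      subst hkm
      have e2 : Bn y kn ((kn+1:ℕ):ℤ) = 0 := Bn_of_gt y (by push_cast; omega)
      rw [eL, e1, e2, etn]
      simp [Nat.sub_self]

lemma twostepB (y : A) (n : ℕ) (k : ℤ) (h0 : 0 ≤ k) (h1 : k ≤ 2*(n:ℤ)+2) :
    Bn y (2*n+2) k = (1 + y^(2*n+1)) * Bn y (2*n) (k-1) + y^(k.toNat) * Bn y (2*n) k
      + y^((2*(n:ℤ)+2-k).toNat) * Bn y (2*n) (k-2) := by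
  rcases eq_or_lt_of_le h1 with heq | hlt
  · -- k = 2n+2
    have hk : k = ((2*n+2 : ℕ) : ℤ) := by push_cast; omega
    have eL : Bn y (2*n+2) k = 1 := by rw [hk]; exact Bn_last y (2*n+2)
    have e1 : Bn y (2*n) (k-1) = 0 := Bn_of_gt y (by push_cast; omega)
    have e2 : Bn y (2*n) k = 0 := Bn_of_gt y (by push_cast; omega)
    have e3 : Bn y (2*n) (k-2) = 1 := by
      rw [show k-2 = ((2*n:ℕ):ℤ) by push_cast; omega]; exact Bn_last y (2*n)
    have e4 : (2*(n:ℤ)+2-k).toNat = 0 := by omega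
    rw [eL, e1, e2, e3, e4]; ring
  · rcases eq_or_lt_of_le h0 with heq0 | hpos
    · -- k = 0
      have eL : Bn y (2*n+2) k = 1 := by rw [← heq0]; exact Bn_zero y (2*n+2)
      have e1 : Bn y (2*n) (k-1) = 0 := Bn_of_neg y (by omega)
      have e2 : Bn y (2*n) k = 1 := by rw [← heq0]; exact Bn_zero y (2*n)
      have e3 : Bn y (2*n) (k-2) = 0 := Bn_of_neg y (by omega)
      have e4 : k.toNat = 0 := by omega
      rw [eL, e1, e2, e3, e4]; ring
    · -- 1 ≤ k ≤ 2n+1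
      have s1 := pascalB1 y (2*n+1) k h0 (by push_cast; omega)
      have s2 := pascalB2 y (2*n) k h0 (by push_cast; omega)
      have s3 := pascalB2 y (2*n) (k-1) (by omega) (by push_cast; omega)
      rw [show (2*n+1+1) = 2*n+2 by ring] at s1
      rw [s1, s2, s3]
      have epow : y^(k.toNat) * y^((2*(n:ℤ)+1-k).toNat) = y^(2*n+1) := by
        rw [← pow_add]
        congr 1
        omega
      have e4 : ((2*n:ℕ):ℤ)+1-k = (2*(n:ℤ)+1-k) := by push_cast; ring
      have e5 : ((2*n:ℕ):ℤ)+1-(k-1) = (2*(n:ℤ)+2-k) := by push_cast; ring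
      have e6 : k - 1 - 1 = k - 2 := by ring
      rw [e4, e5, e6]
      linear_combination Bn y (2*n) (k-1) * epow
noncomputable def ej (j : ℤ) : A := ((j.negOnePow : ℤ) : A)

lemma ej_sub_one (j : ℤ) : (ej (j-1) : A) = - ej j := by
  unfold ej
  rw [Int.negOnePow_sub, Int.negOnePow_one]
  push_cast
  ring

lemma ej_add_one (j : ℤ) : (ej (j+1) : A) = - ej j := by
  unfold ej
  rw [Int.negOnePow_add, Int.negOnePow_one]
  push_cast
  ring

def tri (j : ℤ) : ℤ := j*(j+1)/2

lemma two_tri (j : ℤ) : 2 * tri j = j*(j+1) :=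
  Int.mul_ediv_cancel' (Int.even_mul_succ_self j).two_dvd

lemma tri_nonneg (j : ℤ) : 0 ≤ tri j := by
  have h := two_tri j
  rcases le_or_gt 0 j with h'|h'
  · nlinarith
  · nlinarith

lemma pow_eq_helper (x : A) {a b : ℤ} {c : ℕ} {d : ℤ} (ha : 0 ≤ a) (hb : 0 ≤ b) (hd : 0 ≤ d)
    (h : a + 2*b = (c:ℤ) + d) :
    x^(a.toNat) * (x^2)^(b.toNat) = x^c * x^(d.toNat) := by
  rw [← pow_mul, ← pow_add, ← pow_add]
  congr 1
  omega

lemma pow_eq_helper2 (x : A) {a b : ℤ} {c : ℕ} {d : ℤ} (ha : 0 ≤ a) (hb : 0 ≤ b) (hd : 0 ≤ d)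
    (h : a + b = (c:ℤ) + d) :
    x^(a.toNat) * x^(b.toNat) = x^c * x^(d.toNat) := by
  rw [← pow_add, ← pow_add]
  congr 1
  omega

lemma Bn_out (y : A) (n : ℕ) (j : ℤ) (h : j < -(n:ℤ) ∨ (n:ℤ) < j) :
    Bn y (2*n) ((n:ℤ)+j) = 0 := by
  rcases h with h|h
  · exact Bn_of_neg y (by omega)
  · exact Bn_of_gt y (by push_cast; omega)

lemma sum_window (f : ℤ → A) (n : ℕ) (lo hi : ℤ) (hlo : lo ≤ -(n:ℤ)) (hhi : (n:ℤ) ≤ hi)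
    (hf : ∀ j, (j < -(n:ℤ) ∨ (n:ℤ) < j) → f j = 0) :
    ∑ j ∈ Icc lo hi, f j = ∑ j ∈ Icc (-(n:ℤ)) (n:ℤ), f j := by
  refine (Finset.sum_subset (Finset.Icc_subset_Icc hlo hhi) ?_).symm
  intro j _ hnj
  apply hf
  by_contra hc
  push_neg at hc
  exact hnj (Finset.mem_Icc.mpr ⟨by omega, by omega⟩)

lemma sum_shift (a b c : ℤ) (f : ℤ → A) :
    ∑ j ∈ Icc a b, f (j+c) = ∑ j ∈ Icc (a+c) (b+c), f j := by
  rw [← Finset.map_add_right_Icc, Finset.sum_map]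
  rfl

/-! ### The finite Gauss identity -/

noncomputable def gterm (x : A) (n : ℕ) (j : ℤ) : A :=
  ej j * x^((j*j).toNat) * Bn (x^2) (2*n) ((n:ℤ)+j)

noncomputable def GG (x : A) (n : ℕ) : A := ∑ j ∈ Icc (-(n:ℤ)) (n:ℤ), gterm x n j

lemma gterm_out (x : A) (n : ℕ) : ∀ j, (j < -(n:ℤ) ∨ (n:ℤ) < j) → gterm x n j = 0 := by
  intro j h
  unfold gterm
  rw [Bn_out _ n j h, mul_zero]

lemma GG_rec (x : A) (n : ℕ) : GG x (n+1) = (1 - x^(2*n+1))^2 * GG x n := by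
  have hbound1 : (-((n+1:ℕ):ℤ)) = -((n:ℤ)+1) := by push_cast; ring
  have hbound2 : (((n+1:ℕ)):ℤ) = (n:ℤ)+1 := by push_cast; ring
  have expand : ∀ j ∈ Icc (-((n:ℤ)+1)) ((n:ℤ)+1),
      gterm x (n+1) j
        = (1 + (x^2)^(2*n+1)) * (ej j * x^((j*j).toNat) * Bn (x^2) (2*n) ((n:ℤ)+j))
          + (ej j * x^((j*j).toNat) * (x^2)^(((n:ℤ)+1+j).toNat) * Bn (x^2) (2*n) ((n:ℤ)+1+j)
          + ej j * x^((j*j).toNat) * (x^2)^(((n:ℤ)+1-j).toNat) * Bn (x^2) (2*n) ((n:ℤ)+(j-1))) := by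
    intro j hj
    rw [mem_Icc] at hj
    unfold gterm
    have h2 : (2*(n+1)) = 2*n+2 := by ring
    have harg : ((n+1:ℕ):ℤ) + j = ((n:ℤ)+1+j) := by push_cast; ring
    rw [h2, harg, twostepB (x^2) n ((n:ℤ)+1+j) (by omega) (by push_cast; omega)]
    have e1 : (n:ℤ)+1+j-1 = (n:ℤ)+j := by ring
    have e2 : (n:ℤ)+1+j-2 = (n:ℤ)+(j-1) := by ring
    have e3 : (2*(n:ℤ)+2-((n:ℤ)+1+j)) = ((n:ℤ)+1-j) := by ring
    rw [e1, e2, e3]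
    ring
  rw [show GG x (n+1) = ∑ j ∈ Icc (-((n+1:ℕ):ℤ)) (((n+1:ℕ)):ℤ), gterm x (n+1) j from rfl]
  rw [hbound1, hbound2, Finset.sum_congr rfl expand, Finset.sum_add_distrib,
    Finset.sum_add_distrib]
  -- S1
  have S1 : ∑ j ∈ Icc (-((n:ℤ)+1)) ((n:ℤ)+1),
      (1 + (x^2)^(2*n+1)) * (ej j * x^((j*j).toNat) * Bn (x^2) (2*n) ((n:ℤ)+j))
      = (1 + (x^2)^(2*n+1)) * GG x n := by
    rw [← Finset.mul_sum]
    congr 1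
    exact sum_window (fun j => gterm x n j) n _ _ (by omega) (by omega) (gterm_out x n)
  -- S2
  have S2 : ∑ j ∈ Icc (-((n:ℤ)+1)) ((n:ℤ)+1),
      (ej j * x^((j*j).toNat) * (x^2)^(((n:ℤ)+1+j).toNat) * Bn (x^2) (2*n) ((n:ℤ)+1+j))
      = -(x^(2*n+1)) * GG x n := by
    have hpt : ∀ j ∈ Icc (-((n:ℤ)+1)) ((n:ℤ)+1),
        (ej j * x^((j*j).toNat) * (x^2)^(((n:ℤ)+1+j).toNat) * Bn (x^2) (2*n) ((n:ℤ)+1+j))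
        = (fun j' => ej (j'-1) * x^(((j'-1)*(j'-1)).toNat) * (x^2)^(((n:ℤ)+j').toNat)
            * Bn (x^2) (2*n) ((n:ℤ)+j')) (j+1) := by
      intro j hj
      simp only
      rw [show j+1-1 = j by ring, show (n:ℤ)+(j+1) = (n:ℤ)+1+j by ring]
    have hshift := sum_shift (A := A) (-((n:ℤ)+1)) ((n:ℤ)+1) 1
      (fun j' => ej (j'-1) * x^(((j'-1)*(j'-1)).toNat) * (x^2)^(((n:ℤ)+j').toNat)
            * Bn (x^2) (2*n) ((n:ℤ)+j'))
    rw [Finset.sum_congr rfl hpt, hshift,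
      show (-((n:ℤ)+1)+1) = -(n:ℤ) by ring, show ((n:ℤ)+1+1) = (n:ℤ)+2 by ring]
    have hpt2 : ∀ j' ∈ Icc (-(n:ℤ)) ((n:ℤ)+2),
        ej (j'-1) * x^(((j'-1)*(j'-1)).toNat) * (x^2)^(((n:ℤ)+j').toNat)
            * Bn (x^2) (2*n) ((n:ℤ)+j')
        = -(x^(2*n+1)) * gterm x n j' := by
      intro j' hj'
      rw [mem_Icc] at hj'
      have hp := pow_eq_helper x (a := (j'-1)*(j'-1)) (b := (n:ℤ)+j') (c := 2*n+1)
        (d := j'*j') (mul_self_nonneg _) (by omega) (mul_self_nonneg _) (by push_cast; ring)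
      unfold gterm
      rw [ej_sub_one]
      linear_combination (-(ej j') * Bn (x^2) (2*n) ((n:ℤ)+j')) * hp
    rw [Finset.sum_congr rfl hpt2, ← Finset.mul_sum]
    congr 1
    exact sum_window (fun j => gterm x n j) n _ _ (by omega) (by omega) (gterm_out x n)
  -- S3
  have S3 : ∑ j ∈ Icc (-((n:ℤ)+1)) ((n:ℤ)+1),
      (ej j * x^((j*j).toNat) * (x^2)^(((n:ℤ)+1-j).toNat) * Bn (x^2) (2*n) ((n:ℤ)+(j-1)))
      = -(x^(2*n+1)) * GG x n := by
    have hpt : ∀ j ∈ Icc (-((n:ℤ)+1)) ((n:ℤ)+1),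
        (ej j * x^((j*j).toNat) * (x^2)^(((n:ℤ)+1-j).toNat) * Bn (x^2) (2*n) ((n:ℤ)+(j-1)))
        = (fun j' => ej (j'+1) * x^(((j'+1)*(j'+1)).toNat) * (x^2)^(((n:ℤ)-j').toNat)
            * Bn (x^2) (2*n) ((n:ℤ)+j')) (j+(-1)) := by
      intro j hj
      simp only
      rw [show j+(-1)+1 = j by ring, show (n:ℤ)-(j+(-1)) = (n:ℤ)+1-j by ring,
        show (n:ℤ)+(j+(-1)) = (n:ℤ)+(j-1) by ring]
    have hshift := sum_shift (A := A) (-((n:ℤ)+1)) ((n:ℤ)+1) (-1)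
      (fun j' => ej (j'+1) * x^(((j'+1)*(j'+1)).toNat) * (x^2)^(((n:ℤ)-j').toNat)
            * Bn (x^2) (2*n) ((n:ℤ)+j'))
    rw [Finset.sum_congr rfl hpt, hshift,
      show (-((n:ℤ)+1)+(-1)) = -((n:ℤ)+2) by ring, show ((n:ℤ)+1+(-1)) = (n:ℤ) by ring]
    have hpt2 : ∀ j' ∈ Icc (-((n:ℤ)+2)) ((n:ℤ)),
        ej (j'+1) * x^(((j'+1)*(j'+1)).toNat) * (x^2)^(((n:ℤ)-j').toNat)
            * Bn (x^2) (2*n) ((n:ℤ)+j')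
        = -(x^(2*n+1)) * gterm x n j' := by
      intro j' hj'
      rw [mem_Icc] at hj'
      have hp := pow_eq_helper x (a := (j'+1)*(j'+1)) (b := (n:ℤ)-j') (c := 2*n+1)
        (d := j'*j') (mul_self_nonneg _) (by omega) (mul_self_nonneg _) (by push_cast; ring)
      unfold gterm
      rw [ej_add_one]
      linear_combination (-(ej j') * Bn (x^2) (2*n) ((n:ℤ)+j')) * hp
    rw [Finset.sum_congr rfl hpt2, ← Finset.mul_sum]
    congr 1
    exact sum_window (fun j => gterm x n j) n _ _ (by omega) (by omega) (gterm_out x n)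
  rw [S1, S2, S3]
  have hxx : ((x:A)^2)^(2*n+1) = x^(2*n+1) * x^(2*n+1) := by
    rw [← pow_add, ← pow_mul]
    congr 1
    ring
  rw [hxx]
  ring

theorem gauss_id (x : A) (n : ℕ) :
    (∏ i ∈ Icc 1 n, (1 - x^(2*i-1))^2) = GG x n := by
  induction n with
  | zero =>
    have h0 : Icc (-((0:ℕ):ℤ)) (((0:ℕ)):ℤ) = {0} := by
      ext z
      simp [mem_Icc]
    have hb : Bn (x^2) (2*0) (((0:ℕ):ℤ)+0) = 1 := by
      rw [show (((0:ℕ):ℤ)+0) = (0:ℤ) by omega]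
      exact Bn_zero _ _
    rw [show GG x 0 = ∑ j ∈ Icc (-((0:ℕ):ℤ)) (((0:ℕ)):ℤ), gterm x 0 j from rfl, h0,
      Finset.sum_singleton]
    unfold gterm
    rw [hb]
    unfold ej
    norm_num [Int.negOnePow_zero]
  | succ n ih =>
    rw [GG_rec, ← ih, Finset.prod_Icc_succ_top (by omega),
      show 2*(n+1)-1 = 2*n+1 by omega]
    ring
/-! ### The finite Jacobi cube identity -/

noncomputable def tterm (y : A) (n : ℕ) (j : ℤ) : A :=
  ej j * y^((tri j).toNat) * Bn y (2*n) ((n:ℤ)+j)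

noncomputable def TT (y : A) (n : ℕ) : A := ∑ j ∈ Icc (-(n:ℤ)) (n:ℤ), tterm y n j

noncomputable def sterm (y : A) (n : ℕ) (j : ℤ) : A := (((n:ℤ)+j : ℤ) : A) * tterm y n j

noncomputable def SS (y : A) (n : ℕ) : A := ∑ j ∈ Icc (-(n:ℤ)) (n:ℤ), sterm y n j

lemma tterm_out (y : A) (n : ℕ) : ∀ j, (j < -(n:ℤ) ∨ (n:ℤ) < j) → tterm y n j = 0 := by
  intro j h
  unfold tterm
  rw [Bn_out _ n j h, mul_zero]

lemma sterm_out (y : A) (n : ℕ) : ∀ j, (j < -(n:ℤ) ∨ (n:ℤ) < j) → sterm y n j = 0 := by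
  intro j h
  unfold sterm
  rw [tterm_out _ n j h, mul_zero]

lemma tri_merge2 (n : ℕ) (j' : ℤ) : tri (j'-1) + ((n:ℤ)+j') = (n:ℤ) + tri j' := by
  have h1 := two_tri (j'-1)
  have h2 := two_tri j'
  have e : (j'-1)*((j'-1)+1) = j'*(j'+1) - 2*j' := by ring
  linarith

lemma tri_merge3 (n : ℕ) (j' : ℤ) : tri (j'+1) + ((n:ℤ)-j') = ((n:ℤ)+1) + tri j' := by
  have h1 := two_tri (j'+1)
  have h2 := two_tri j'
  have e : (j'+1)*((j'+1)+1) = j'*(j'+1) + 2*(j'+1) := by ring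
  linarith

lemma TT_rec (y : A) (n : ℕ) : TT y (n+1) = (1 - y^n) * (1 - y^(n+1)) * TT y n := by
  have hbound1 : (-((n+1:ℕ):ℤ)) = -((n:ℤ)+1) := by push_cast; ring
  have hbound2 : (((n+1:ℕ)):ℤ) = (n:ℤ)+1 := by push_cast; ring
  have expand : ∀ j ∈ Icc (-((n:ℤ)+1)) ((n:ℤ)+1),
      tterm y (n+1) j
        = (1 + y^(2*n+1)) * (ej j * y^((tri j).toNat) * Bn y (2*n) ((n:ℤ)+j))
          + (ej j * y^((tri j).toNat) * y^(((n:ℤ)+1+j).toNat) * Bn y (2*n) ((n:ℤ)+1+j)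
          + ej j * y^((tri j).toNat) * y^(((n:ℤ)+1-j).toNat) * Bn y (2*n) ((n:ℤ)+(j-1))) := by
    intro j hj
    rw [mem_Icc] at hj
    unfold tterm
    have h2 : (2*(n+1)) = 2*n+2 := by ring
    have harg : ((n+1:ℕ):ℤ) + j = ((n:ℤ)+1+j) := by push_cast; ring
    rw [h2, harg, twostepB y n ((n:ℤ)+1+j) (by omega) (by push_cast; omega)]
    have e1 : (n:ℤ)+1+j-1 = (n:ℤ)+j := by ring
    have e2 : (n:ℤ)+1+j-2 = (n:ℤ)+(j-1) := by ring
    have e3 : (2*(n:ℤ)+2-((n:ℤ)+1+j)) = ((n:ℤ)+1-j) := by ring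
    rw [e1, e2, e3]
    ring
  rw [show TT y (n+1) = ∑ j ∈ Icc (-((n+1:ℕ):ℤ)) (((n+1:ℕ)):ℤ), tterm y (n+1) j from rfl]
  rw [hbound1, hbound2, Finset.sum_congr rfl expand, Finset.sum_add_distrib,
    Finset.sum_add_distrib]
  have S1 : ∑ j ∈ Icc (-((n:ℤ)+1)) ((n:ℤ)+1),
      (1 + y^(2*n+1)) * (ej j * y^((tri j).toNat) * Bn y (2*n) ((n:ℤ)+j))
      = (1 + y^(2*n+1)) * TT y n := by
    rw [← Finset.mul_sum]
    congr 1
    exact sum_window (fun j => tterm y n j) n _ _ (by omega) (by omega) (tterm_out y n)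
  have S2 : ∑ j ∈ Icc (-((n:ℤ)+1)) ((n:ℤ)+1),
      (ej j * y^((tri j).toNat) * y^(((n:ℤ)+1+j).toNat) * Bn y (2*n) ((n:ℤ)+1+j))
      = -(y^n) * TT y n := by
    have hpt : ∀ j ∈ Icc (-((n:ℤ)+1)) ((n:ℤ)+1),
        (ej j * y^((tri j).toNat) * y^(((n:ℤ)+1+j).toNat) * Bn y (2*n) ((n:ℤ)+1+j))
        = (fun j' => ej (j'-1) * y^((tri (j'-1)).toNat) * y^(((n:ℤ)+j').toNat)
            * Bn y (2*n) ((n:ℤ)+j')) (j+1) := by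
      intro j hj
      simp only
      rw [show j+1-1 = j by ring, show (n:ℤ)+(j+1) = (n:ℤ)+1+j by ring]
    have hshift := sum_shift (A := A) (-((n:ℤ)+1)) ((n:ℤ)+1) 1
      (fun j' => ej (j'-1) * y^((tri (j'-1)).toNat) * y^(((n:ℤ)+j').toNat)
            * Bn y (2*n) ((n:ℤ)+j'))
    rw [Finset.sum_congr rfl hpt, hshift,
      show (-((n:ℤ)+1)+1) = -(n:ℤ) by ring, show ((n:ℤ)+1+1) = (n:ℤ)+2 by ring]
    have hpt2 : ∀ j' ∈ Icc (-(n:ℤ)) ((n:ℤ)+2),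
        ej (j'-1) * y^((tri (j'-1)).toNat) * y^(((n:ℤ)+j').toNat) * Bn y (2*n) ((n:ℤ)+j')
        = -(y^n) * tterm y n j' := by
      intro j' hj'
      rw [mem_Icc] at hj'
      have hp := pow_eq_helper2 y (a := tri (j'-1)) (b := (n:ℤ)+j') (c := n)
        (d := tri j') (tri_nonneg _) (by omega) (tri_nonneg _) (tri_merge2 n j')
      unfold tterm
      rw [ej_sub_one]
      linear_combination (-(ej j') * Bn y (2*n) ((n:ℤ)+j')) * hp
    rw [Finset.sum_congr rfl hpt2, ← Finset.mul_sum]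
    congr 1
    exact sum_window (fun j => tterm y n j) n _ _ (by omega) (by omega) (tterm_out y n)
  have S3 : ∑ j ∈ Icc (-((n:ℤ)+1)) ((n:ℤ)+1),
      (ej j * y^((tri j).toNat) * y^(((n:ℤ)+1-j).toNat) * Bn y (2*n) ((n:ℤ)+(j-1)))
      = -(y^(n+1)) * TT y n := by
    have hpt : ∀ j ∈ Icc (-((n:ℤ)+1)) ((n:ℤ)+1),
        (ej j * y^((tri j).toNat) * y^(((n:ℤ)+1-j).toNat) * Bn y (2*n) ((n:ℤ)+(j-1)))
        = (fun j' => ej (j'+1) * y^((tri (j'+1)).toNat) * y^(((n:ℤ)-j').toNat)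
            * Bn y (2*n) ((n:ℤ)+j')) (j+(-1)) := by
      intro j hj
      simp only
      rw [show j+(-1)+1 = j by ring, show (n:ℤ)-(j+(-1)) = (n:ℤ)+1-j by ring,
        show (n:ℤ)+(j+(-1)) = (n:ℤ)+(j-1) by ring]
    have hshift := sum_shift (A := A) (-((n:ℤ)+1)) ((n:ℤ)+1) (-1)
      (fun j' => ej (j'+1) * y^((tri (j'+1)).toNat) * y^(((n:ℤ)-j').toNat)
            * Bn y (2*n) ((n:ℤ)+j'))
    rw [Finset.sum_congr rfl hpt, hshift,
      show (-((n:ℤ)+1)+(-1)) = -((n:ℤ)+2) by ring, show ((n:ℤ)+1+(-1)) = (n:ℤ) by ring]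
    have hpt2 : ∀ j' ∈ Icc (-((n:ℤ)+2)) ((n:ℤ)),
        ej (j'+1) * y^((tri (j'+1)).toNat) * y^(((n:ℤ)-j').toNat) * Bn y (2*n) ((n:ℤ)+j')
        = -(y^(n+1)) * tterm y n j' := by
      intro j' hj'
      rw [mem_Icc] at hj'
      have hp := pow_eq_helper2 y (a := tri (j'+1)) (b := (n:ℤ)-j') (c := n+1)
        (d := tri j') (tri_nonneg _) (by omega) (tri_nonneg _) (by push_cast; exact tri_merge3 n j')
      unfold tterm
      rw [ej_add_one]
      linear_combination (-(ej j') * Bn y (2*n) ((n:ℤ)+j')) * hp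
    rw [Finset.sum_congr rfl hpt2, ← Finset.mul_sum]
    congr 1
    exact sum_window (fun j => tterm y n j) n _ _ (by omega) (by omega) (tterm_out y n)
  rw [S1, S2, S3]
  ring

lemma SS_rec (y : A) (n : ℕ) : SS y (n+1)
    = (1 - y^n) * (1 - y^(n+1)) * SS y n + (1 + y^(2*n+1) - 2*y^(n+1)) * TT y n := by
  have hbound1 : (-((n+1:ℕ):ℤ)) = -((n:ℤ)+1) := by push_cast; ring
  have hbound2 : (((n+1:ℕ)):ℤ) = (n:ℤ)+1 := by push_cast; ring
  have expand : ∀ j ∈ Icc (-((n:ℤ)+1)) ((n:ℤ)+1),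
      sterm y (n+1) j
        = (1 + y^(2*n+1)) * (sterm y n j + tterm y n j)
          + ((((n:ℤ)+1+j : ℤ):A) * (ej j * y^((tri j).toNat) * y^(((n:ℤ)+1+j).toNat) * Bn y (2*n) ((n:ℤ)+1+j))
          + (((n:ℤ)+1+j : ℤ):A) * (ej j * y^((tri j).toNat) * y^(((n:ℤ)+1-j).toNat) * Bn y (2*n) ((n:ℤ)+(j-1)))) := by
    intro j hj
    rw [mem_Icc] at hj
    unfold sterm tterm
    have h2 : (2*(n+1)) = 2*n+2 := by ring
    have harg : ((n+1:ℕ):ℤ) + j = ((n:ℤ)+1+j) := by push_cast; ring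
    rw [h2, harg, twostepB y n ((n:ℤ)+1+j) (by omega) (by push_cast; omega)]
    have e1 : (n:ℤ)+1+j-1 = (n:ℤ)+j := by ring
    have e2 : (n:ℤ)+1+j-2 = (n:ℤ)+(j-1) := by ring
    have e3 : (2*(n:ℤ)+2-((n:ℤ)+1+j)) = ((n:ℤ)+1-j) := by ring
    rw [e1, e2, e3]
    have hw : (((n:ℤ)+1+j : ℤ) : A) = (((n:ℤ)+j : ℤ) : A) + 1 := by push_cast; ring
    rw [hw]
    ring
  rw [show SS y (n+1) = ∑ j ∈ Icc (-((n+1:ℕ):ℤ)) (((n+1:ℕ)):ℤ), sterm y (n+1) j from rfl]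
  rw [hbound1, hbound2, Finset.sum_congr rfl expand, Finset.sum_add_distrib,
    Finset.sum_add_distrib]
  have S1 : ∑ j ∈ Icc (-((n:ℤ)+1)) ((n:ℤ)+1),
      (1 + y^(2*n+1)) * (sterm y n j + tterm y n j)
      = (1 + y^(2*n+1)) * (SS y n + TT y n) := by
    rw [← Finset.mul_sum]
    congr 1
    rw [Finset.sum_add_distrib]
    congr 1
    · exact sum_window (fun j => sterm y n j) n _ _ (by omega) (by omega) (sterm_out y n)
    · exact sum_window (fun j => tterm y n j) n _ _ (by omega) (by omega) (tterm_out y n)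
  have S2 : ∑ j ∈ Icc (-((n:ℤ)+1)) ((n:ℤ)+1),
      (((n:ℤ)+1+j : ℤ):A) * (ej j * y^((tri j).toNat) * y^(((n:ℤ)+1+j).toNat) * Bn y (2*n) ((n:ℤ)+1+j))
      = -(y^n) * SS y n := by
    have hpt : ∀ j ∈ Icc (-((n:ℤ)+1)) ((n:ℤ)+1),
        (((n:ℤ)+1+j : ℤ):A) * (ej j * y^((tri j).toNat) * y^(((n:ℤ)+1+j).toNat) * Bn y (2*n) ((n:ℤ)+1+j))
        = (fun j' => (((n:ℤ)+j' : ℤ):A) * (ej (j'-1) * y^((tri (j'-1)).toNat) * y^(((n:ℤ)+j').toNat)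
            * Bn y (2*n) ((n:ℤ)+j'))) (j+1) := by
      intro j hj
      simp only
      rw [show j+1-1 = j by ring, show (n:ℤ)+(j+1) = (n:ℤ)+1+j by ring]
    have hshift := sum_shift (A := A) (-((n:ℤ)+1)) ((n:ℤ)+1) 1
      (fun j' => (((n:ℤ)+j' : ℤ):A) * (ej (j'-1) * y^((tri (j'-1)).toNat) * y^(((n:ℤ)+j').toNat)
            * Bn y (2*n) ((n:ℤ)+j')))
    rw [Finset.sum_congr rfl hpt, hshift,
      show (-((n:ℤ)+1)+1) = -(n:ℤ) by ring, show ((n:ℤ)+1+1) = (n:ℤ)+2 by ring]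
    have hpt2 : ∀ j' ∈ Icc (-(n:ℤ)) ((n:ℤ)+2),
        (((n:ℤ)+j' : ℤ):A) * (ej (j'-1) * y^((tri (j'-1)).toNat) * y^(((n:ℤ)+j').toNat)
            * Bn y (2*n) ((n:ℤ)+j'))
        = -(y^n) * sterm y n j' := by
      intro j' hj'
      rw [mem_Icc] at hj'
      have hp := pow_eq_helper2 y (a := tri (j'-1)) (b := (n:ℤ)+j') (c := n)
        (d := tri j') (tri_nonneg _) (by omega) (tri_nonneg _) (tri_merge2 n j')
      unfold sterm tterm
      rw [ej_sub_one]
      linear_combination ((((n:ℤ)+j' : ℤ):A) * (-(ej j')) * Bn y (2*n) ((n:ℤ)+j')) * hp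
    rw [Finset.sum_congr rfl hpt2, ← Finset.mul_sum]
    congr 1
    exact sum_window (fun j => sterm y n j) n _ _ (by omega) (by omega) (sterm_out y n)
  have S3 : ∑ j ∈ Icc (-((n:ℤ)+1)) ((n:ℤ)+1),
      (((n:ℤ)+1+j : ℤ):A) * (ej j * y^((tri j).toNat) * y^(((n:ℤ)+1-j).toNat) * Bn y (2*n) ((n:ℤ)+(j-1)))
      = -(y^(n+1)) * SS y n + (-(2*y^(n+1))) * TT y n := by
    have hpt : ∀ j ∈ Icc (-((n:ℤ)+1)) ((n:ℤ)+1),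
        (((n:ℤ)+1+j : ℤ):A) * (ej j * y^((tri j).toNat) * y^(((n:ℤ)+1-j).toNat) * Bn y (2*n) ((n:ℤ)+(j-1)))
        = (fun j' => (((n:ℤ)+2+j' : ℤ):A) * (ej (j'+1) * y^((tri (j'+1)).toNat) * y^(((n:ℤ)-j').toNat)
            * Bn y (2*n) ((n:ℤ)+j'))) (j+(-1)) := by
      intro j hj
      simp only
      rw [show j+(-1)+1 = j by ring, show (n:ℤ)-(j+(-1)) = (n:ℤ)+1-j by ring,
        show (n:ℤ)+(j+(-1)) = (n:ℤ)+(j-1) by ring, show (n:ℤ)+2+(j+(-1)) = (n:ℤ)+1+j by ring]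
    have hshift := sum_shift (A := A) (-((n:ℤ)+1)) ((n:ℤ)+1) (-1)
      (fun j' => (((n:ℤ)+2+j' : ℤ):A) * (ej (j'+1) * y^((tri (j'+1)).toNat) * y^(((n:ℤ)-j').toNat)
            * Bn y (2*n) ((n:ℤ)+j')))
    rw [Finset.sum_congr rfl hpt, hshift,
      show (-((n:ℤ)+1)+(-1)) = -((n:ℤ)+2) by ring, show ((n:ℤ)+1+(-1)) = (n:ℤ) by ring]
    have hpt2 : ∀ j' ∈ Icc (-((n:ℤ)+2)) ((n:ℤ)),
        (((n:ℤ)+2+j' : ℤ):A) * (ej (j'+1) * y^((tri (j'+1)).toNat) * y^(((n:ℤ)-j').toNat)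
            * Bn y (2*n) ((n:ℤ)+j'))
        = -(y^(n+1)) * sterm y n j' + (-(2*y^(n+1))) * tterm y n j' := by
      intro j' hj'
      rw [mem_Icc] at hj'
      have hp := pow_eq_helper2 y (a := tri (j'+1)) (b := (n:ℤ)-j') (c := n+1)
        (d := tri j') (tri_nonneg _) (by omega) (tri_nonneg _) (by push_cast; exact tri_merge3 n j')
      unfold sterm tterm
      rw [ej_add_one]
      have hw : (((n:ℤ)+2+j' : ℤ) : A) = (((n:ℤ)+j' : ℤ) : A) + 2 := by push_cast; ring
      rw [hw]
      linear_combination (((((n:ℤ)+j' : ℤ):A) + 2) * (-(ej j')) * Bn y (2*n) ((n:ℤ)+j')) * hp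
    rw [Finset.sum_congr rfl hpt2, Finset.sum_add_distrib, ← Finset.mul_sum, ← Finset.mul_sum]
    congr 1
    · congr 1
      exact sum_window (fun j => sterm y n j) n _ _ (by omega) (by omega) (sterm_out y n)
    · congr 1
      exact sum_window (fun j => tterm y n j) n _ _ (by omega) (by omega) (tterm_out y n)
  rw [S1, S2, S3]
  ring
lemma ej_zero : (ej 0 : A) = 1 := by unfold ej; rw [Int.negOnePow_zero]; norm_num

lemma ej_one : (ej 1 : A) = -1 := by unfold ej; rw [Int.negOnePow_one]; push_cast; ring

lemma ej_neg_one : (ej (-1) : A) = -1 := by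
  unfold ej
  rw [show (-1 : ℤ) = 0 - 1 by ring, Int.negOnePow_sub, Int.negOnePow_zero, Int.negOnePow_one]
  push_cast
  ring

lemma Icc_neg_one_one : Icc (-1:ℤ) 1 = ({-1, 0, 1} : Finset ℤ) := by
  ext z
  simp [mem_Icc]
  omega

lemma tterm_one_neg_one (y : A) : tterm y 1 (-1) = -1 := by
  unfold tterm
  rw [show ((1:ℕ):ℤ) + (-1) = (0:ℤ) by omega, Bn_zero, ej_neg_one,
    show tri (-1) = 0 by rfl]
  norm_num

lemma tterm_one_zero (y : A) : tterm y 1 0 = 1 + y := by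
  unfold tterm
  have hB : Bn y (2*1) (((1:ℕ)):ℤ) = gb y 1 1 := by
    have := Bn_eq_gb y 2 1 (by omega)
    rw [show (2*1) = 2 by norm_num]
    exact this
  rw [show ((1:ℕ):ℤ) + (0:ℤ) = ((1:ℕ):ℤ) by omega, hB, ej_zero,
    show tri 0 = 0 by rfl, gb_succ]
  norm_num

lemma tterm_one_one (y : A) : tterm y 1 1 = -y := by
  unfold tterm
  have hB : Bn y (2*1) (((2:ℕ)):ℤ) = 1 := by
    rw [show (2*1) = 2 by norm_num]
    exact Bn_last y 2
  rw [show ((1:ℕ):ℤ) + (1:ℤ) = ((2:ℕ):ℤ) by omega, hB, ej_one,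
    show tri 1 = 1 by rfl]
  norm_num

lemma TT_one (y : A) : TT y 1 = 0 := by
  rw [show TT y 1 = ∑ j ∈ Icc (-((1:ℕ):ℤ)) (((1:ℕ)):ℤ), tterm y 1 j from rfl,
    show (-((1:ℕ):ℤ)) = (-1:ℤ) by norm_num, show (((1:ℕ)):ℤ) = (1:ℤ) by norm_num,
    Icc_neg_one_one]
  rw [Finset.sum_insert (by decide), Finset.sum_insert (by decide), Finset.sum_singleton]
  rw [tterm_one_neg_one, tterm_one_zero, tterm_one_one]
  ring

lemma SS_one (y : A) : SS y 1 = 1 - y := by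
  rw [show SS y 1 = ∑ j ∈ Icc (-((1:ℕ):ℤ)) (((1:ℕ)):ℤ), sterm y 1 j from rfl,
    show (-((1:ℕ):ℤ)) = (-1:ℤ) by norm_num, show (((1:ℕ)):ℤ) = (1:ℤ) by norm_num,
    Icc_neg_one_one]
  rw [Finset.sum_insert (by decide), Finset.sum_insert (by decide), Finset.sum_singleton]
  unfold sterm
  rw [tterm_one_neg_one, tterm_one_zero, tterm_one_one]
  push_cast
  ring

lemma TT_zero (y : A) : ∀ n : ℕ, 1 ≤ n → TT y n = 0 := by
  intro n
  induction n with
  | zero => omega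
  | succ n ih =>
    intro _
    rcases Nat.eq_zero_or_pos n with h|h
    · subst h
      exact TT_one y
    · rw [TT_rec, ih h, mul_zero]

lemma SS_closed (y : A) : ∀ n : ℕ, 1 ≤ n →
    SS y n = (∏ i ∈ Icc 1 (n-1), (1 - y^i)^2) * (1 - y^n) := by
  intro n
  induction n with
  | zero => omega
  | succ n ih =>
    intro _
    rcases Nat.eq_zero_or_pos n with h|h
    · subst h
      simp only [Nat.add_sub_cancel]
      rw [SS_one]
      simp
    · rw [SS_rec, TT_zero y n h, ih h, mul_zero, add_zero]
      obtain ⟨m, rfl⟩ : ∃ m, n = m+1 := ⟨n-1, by omega⟩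
      simp only [Nat.add_sub_cancel]
      rw [Finset.prod_Icc_succ_top (by omega : 1 ≤ m+1)]
      ring
/-! ### box estimates -/

lemma prod_Icc_split (f : ℕ → A) (b m : ℕ) (h : b ≤ m) :
    ∏ i ∈ Icc 1 m, f i = (∏ i ∈ Icc 1 b, f i) * ∏ i ∈ Icc (b+1) m, f i := by
  classical
  have hset : Icc 1 m = Icc 1 b ∪ Icc (b+1) m := by
    ext z
    simp only [mem_Icc, mem_union]
    omega
  have hdisj : Disjoint (Icc 1 b) (Icc (b+1) m) := by
    rw [Finset.disjoint_left]
    intro z hz1 hz2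
    simp only [mem_Icc] at hz1 hz2
    omega
  rw [hset, Finset.prod_union hdisj]

lemma Bn_abs (y : A) (n : ℕ) (j : ℤ) (h : j.natAbs ≤ n) :
    Bn y (2*n) ((n:ℤ)+j) = gb y (n + j.natAbs) (n - j.natAbs) := by
  rcases le_or_gt 0 j with hj | hj
  · have e : (n:ℤ)+j = ((n + j.natAbs : ℕ) : ℤ) := by omega
    rw [e, Bn_eq_gb y (2*n) (n + j.natAbs) (by omega)]
    rw [show 2*n - (n + j.natAbs) = n - j.natAbs by omega]
    exact gb_symm y _ _
  · have e : (n:ℤ)+j = ((n - j.natAbs : ℕ) : ℤ) := by omega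
    rw [e, Bn_eq_gb y (2*n) (n - j.natAbs) (by omega)]
    rw [show 2*n - (n - j.natAbs) = n + j.natAbs by omega]

lemma boxP (y : A) (n M : ℕ) (j : ℤ) (hj : j.natAbs ≤ n) (hM : n ≤ M) :
    ∃ w : A, Bn y (2*n) ((n:ℤ)+j) * (∏ i ∈ Icc 1 M, (1 - y^i))
      = 1 + y^(n - j.natAbs + 1) * w := by
  set a := j.natAbs with ha
  obtain ⟨h1, hbox⟩ := gb_box y (n + a) (n - a)
  obtain ⟨w2, hw2⟩ := prod_one_sub_pow y (n - a + 1) M (by omega)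
  rw [Bn_abs y n j hj]
  rw [prod_Icc_split (fun i => (1 - y^i)) (n - a) M (by omega)]
  refine ⟨y^(2*a) * h1 + w2 + y^(n + a + 1) * (h1 * w2), ?_⟩
  have hcomb : y^(n - a + 1) * y^(2*a) = y^(n + a + 1) := by
    rw [← pow_add]
    congr 1
    omega
  calc gb y (n + a) (n - a) * ((∏ i ∈ Icc 1 (n - a), (1 - y^i)) * ∏ i ∈ Icc (n-a+1) M, (1 - y^i))
      = ((∏ i ∈ Icc 1 (n - a), (1 - y^i)) * gb y (n + a) (n - a)) * ∏ i ∈ Icc (n-a+1) M, (1 - y^i) := by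
        ring
    _ = (1 + y^(n + a + 1) * h1) * (1 + y^(n - a + 1) * w2) := by rw [hbox, hw2]
    _ = 1 + y^(n - a + 1) * (y^(2*a) * h1 + w2 + y^(n + a + 1) * (h1 * w2)) := by
        linear_combination (-h1) * hcomb
/-! ### Coefficient extraction -/

section Extraction
open PowerSeries

variable {R : Type*} [CommRing R]

lemma coeff_X_pow_mul_zero (f : R⟦X⟧) (e v : ℕ) (h : v < e) :
    coeff (R := R) v ((X : R⟦X⟧)^e * f) = 0 := by
  rw [PowerSeries.coeff_mul]
  refine Finset.sum_eq_zero ?_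
  intro p hp
  rw [Finset.HasAntidiagonal.mem_antidiagonal] at hp
  rw [PowerSeries.coeff_X_pow, if_neg (by omega), zero_mul]

lemma natAbs_sq_toNat (j : ℤ) : (j*j).toNat = j.natAbs * j.natAbs := by
  rw [← Int.natAbs_mul_self' j]
  exact Int.toNat_natCast _

lemma tri_natAbs_le (j : ℤ) : (j.natAbs : ℤ) ≤ tri j + 1 := by
  have h2t := two_tri j
  rcases le_or_gt 0 j with hj | hj
  · rw [Int.natAbs_of_nonneg hj]
    nlinarith [sq_nonneg (j-1)]
  · rw [Int.ofNat_natAbs_of_nonpos (by omega)]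
    rcases le_or_gt j (-2) with h2 | h2
    · nlinarith [mul_nonneg (by omega : (0:ℤ) ≤ -(j+1)) (by omega : (0:ℤ) ≤ -(j+2))]
    · have hj1 : j = -1 := by omega
      subst hj1
      norm_num [tri]

lemma tri_toNat_ne (j : ℤ) (e : ℕ) (he3 : e % 3 = 2) : (tri j).toNat ≠ e := by
  intro hcon
  have htn := tri_nonneg j
  have htri : tri j = (e : ℤ) := by omega
  have h2t := two_tri j
  rw [htri] at h2t
  have hz : (2 : ZMod 3) * ((e:ℕ) : ZMod 3) = (j : ZMod 3) * ((j : ZMod 3) + 1) := by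
    have hc := congrArg (fun z : ℤ => (z : ZMod 3)) h2t
    push_cast at hc
    linear_combination hc
  have he2 : ((e:ℕ) : ZMod 3) = 2 := by
    obtain ⟨q, rfl⟩ : ∃ q, e = 3*q+2 := ⟨e/3, by omega⟩
    push_cast
    rw [show ((3:ZMod 3)) = 0 by decide]
    ring
  rw [he2] at hz
  have : ∀ v : ZMod 3, (2 : ZMod 3) * 2 ≠ v * (v + 1) := by decide
  exact this ((j : ZMod 3)) hz

theorem gauss_coeff_zero (N v : ℕ) (hv : v ≤ 2*N) (hns : ∀ k : ℕ, v ≠ k*k) :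
    (PowerSeries.coeff (R := R) v) ((∏ i ∈ Icc 1 N, (1 - (X : R⟦X⟧)^(2*i-1))^2) *
      ∏ i ∈ Icc 1 (2*N), (1 - (X : R⟦X⟧)^(2*i))) = 0 := by
  have hP : (∏ i ∈ Icc 1 (2*N), (1 - (X : R⟦X⟧)^(2*i)))
      = ∏ i ∈ Icc 1 (2*N), (1 - ((X : R⟦X⟧)^2)^i) :=
    Finset.prod_congr rfl fun i _ => by rw [← pow_mul]
  rw [gauss_id (X : R⟦X⟧) N, hP]
  rw [show GG (X : R⟦X⟧) N = ∑ j ∈ Icc (-(N:ℤ)) (N:ℤ), gterm (X:R⟦X⟧) N j from rfl]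
  rw [Finset.sum_mul, map_sum]
  refine Finset.sum_eq_zero ?_
  intro j hj
  rw [mem_Icc] at hj
  have haN : j.natAbs ≤ N := by omega
  obtain ⟨w, hw⟩ := boxP ((X:R⟦X⟧)^2) N (2*N) j haN (by omega)
  have hmerge : (X:R⟦X⟧)^((j*j).toNat) * (((X:R⟦X⟧)^2)^(N - j.natAbs + 1) * w)
      = X^((j*j).toNat + 2*(N - j.natAbs + 1)) * w := by
    rw [← pow_mul, ← mul_assoc, ← pow_add]
  have hterm : gterm (X:R⟦X⟧) N j * (∏ i ∈ Icc 1 (2*N), (1 - ((X:R⟦X⟧)^2)^i))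
      = C (R := R) (((j.negOnePow : ℤ) : R)) *
        ((X:R⟦X⟧)^((j*j).toNat) + X^((j*j).toNat + 2*(N - j.natAbs + 1)) * w) := by
    unfold gterm ej
    rw [← map_intCast (C (R := R)) ((j.negOnePow : ℤ))]
    linear_combination (C (R := R) (((j.negOnePow : ℤ) : R)) * (X:R⟦X⟧)^((j*j).toNat)) * hw
      + (C (R := R) (((j.negOnePow : ℤ) : R))) * hmerge
  rw [hterm, PowerSeries.coeff_C_mul, map_add]
  have h1 : coeff (R := R) v ((X:R⟦X⟧)^((j*j).toNat)) = 0 := by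
    rw [PowerSeries.coeff_X_pow, if_neg]
    intro hcon
    exact hns j.natAbs (by rw [hcon, natAbs_sq_toNat])
  have h2 : coeff (R := R) v ((X:R⟦X⟧)^((j*j).toNat + 2*(N - j.natAbs + 1)) * w) = 0 := by
    apply coeff_X_pow_mul_zero
    have hsq : j.natAbs * j.natAbs + 1 ≥ 2 * j.natAbs := by nlinarith
    rw [natAbs_sq_toNat]
    omega
  rw [h1, h2, add_zero, mul_zero]

theorem jacobi_coeff_zero (m e : ℕ) (hm : 1 ≤ m) (he : e + 1 < m) (he3 : e % 3 = 2) :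
    (PowerSeries.coeff (R := R) (6*e)) (∏ i ∈ Icc 1 m, (1 - (X:R⟦X⟧)^(6*i))^3) = 0 := by
  set y : R⟦X⟧ := (X:R⟦X⟧)^6 with hy
  have hcube : ∏ i ∈ Icc 1 m, (1 - (X:R⟦X⟧)^(6*i))^3
      = SS y m * ((∏ i ∈ Icc 1 m, (1 - y^i)) * (1 - y^m)) := by
    rw [SS_closed y m hm]
    obtain ⟨m', rfl⟩ : ∃ m', m = m'+1 := ⟨m-1, by omega⟩
    simp only [Nat.add_sub_cancel]
    have hc : ∀ i ∈ Icc 1 (m'+1), (1 - (X:R⟦X⟧)^(6*i))^3 = (1 - y^i)^3 := fun i _ => by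
      rw [hy, ← pow_mul]
    rw [Finset.prod_congr rfl hc]
    rw [Finset.prod_Icc_succ_top (show 1 ≤ m'+1 by omega) (fun i => (1-y^i)^3),
        Finset.prod_Icc_succ_top (show 1 ≤ m'+1 by omega) (fun i => (1-y^i))]
    rw [show (∏ i ∈ Icc 1 m', (1-y^i)^3)
        = (∏ i ∈ Icc 1 m', (1-y^i)^2) * ∏ i ∈ Icc 1 m', (1-y^i) from by
      rw [← Finset.prod_mul_distrib]
      exact Finset.prod_congr rfl fun i _ => by ring]
    ring
  rw [hcube]
  rw [show SS y m = ∑ j ∈ Icc (-(m:ℤ)) (m:ℤ), sterm y m j from rfl, Finset.sum_mul, map_sum]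
  refine Finset.sum_eq_zero ?_
  intro j hj
  rw [mem_Icc] at hj
  have haN : j.natAbs ≤ m := by omega
  obtain ⟨w, hw⟩ := boxP y m m j haN le_rfl
  set t := (tri j).toNat with ht
  set s := m - j.natAbs + 1 with hs
  have p1 : y^t = (X:R⟦X⟧)^(6*t) := by rw [hy]; exact (pow_mul _ 6 t).symm
  have p2 : y^(t+m) = (X:R⟦X⟧)^(6*(t+m)) := by rw [hy]; exact (pow_mul _ 6 _).symm
  have p3 : y^(t+s) = (X:R⟦X⟧)^(6*(t+s)) := by rw [hy]; exact (pow_mul _ 6 _).symm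
  have p4 : y^(t+s+m) = (X:R⟦X⟧)^(6*(t+s+m)) := by rw [hy]; exact (pow_mul _ 6 _).symm
  have hterm : sterm y m j * ((∏ i ∈ Icc 1 m, (1 - y^i)) * (1 - y^m))
      = C (R := R) ((((m:ℤ)+j : ℤ) : R)) * (C (R := R) (((j.negOnePow : ℤ) : R)) *
        ((X:R⟦X⟧)^(6*t) - X^(6*(t+m)) + ((X:R⟦X⟧)^(6*(t+s)) * w - X^(6*(t+s+m)) * w))) := by
    unfold sterm tterm ej
    rw [← map_intCast (C (R := R)) ((j.negOnePow : ℤ)), ← map_intCast (C (R := R)) (((m:ℤ)+j : ℤ))]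
    linear_combination (C (R := R) ((((m:ℤ)+j : ℤ) : R)) * C (R := R) (((j.negOnePow : ℤ) : R)) * y^t * (1 - y^m)) * hw
      + (C (R := R) ((((m:ℤ)+j : ℤ) : R)) * C (R := R) (((j.negOnePow : ℤ) : R))) * p1
      - (C (R := R) ((((m:ℤ)+j : ℤ) : R)) * C (R := R) (((j.negOnePow : ℤ) : R))) * p2
      + (C (R := R) ((((m:ℤ)+j : ℤ) : R)) * C (R := R) (((j.negOnePow : ℤ) : R)) * w) * p3
      - (C (R := R) ((((m:ℤ)+j : ℤ) : R)) * C (R := R) (((j.negOnePow : ℤ) : R)) * w) * p4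
  rw [hterm, PowerSeries.coeff_C_mul, PowerSeries.coeff_C_mul, map_add, map_sub]
  have hta : j.natAbs ≤ t + 1 := by
    have h1 := tri_natAbs_le j
    have h2 := tri_nonneg j
    omega
  have h1 : coeff (R := R) (6*e) ((X:R⟦X⟧)^(6*t)) = 0 := by
    rw [PowerSeries.coeff_X_pow, if_neg]
    have := tri_toNat_ne j e he3
    omega
  have h2 : coeff (R := R) (6*e) ((X:R⟦X⟧)^(6*(t+m))) = 0 := by
    rw [PowerSeries.coeff_X_pow, if_neg]
    omega
  have h3 : coeff (R := R) (6*e) ((X:R⟦X⟧)^(6*(t+s)) * w) = 0 := by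
    apply coeff_X_pow_mul_zero
    omega
  have h4 : coeff (R := R) (6*e) ((X:R⟦X⟧)^(6*(t+s+m)) * w) = 0 := by
    apply coeff_X_pow_mul_zero
    omega
  rw [map_sub, h1, h2, h3, h4]
  ring

end Extraction
/-! ### Support and tail lemmas for power series -/

section Assembly
open PowerSeries

variable {R : Type*} [CommRing R]

def csupp (c : ℕ) (f : R⟦X⟧) : Prop := ∀ v : ℕ, ¬ (c ∣ v) → coeff (R := R) v f = 0

lemma csupp_one (c : ℕ) : csupp c (1 : R⟦X⟧) := by
  intro v hv
  rw [PowerSeries.coeff_one, if_neg]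
  intro h
  exact hv (h ▸ dvd_zero c)

lemma csupp_mul {c : ℕ} {f g : R⟦X⟧} (hf : csupp c f) (hg : csupp c g) : csupp c (f*g) := by
  intro v hv
  rw [PowerSeries.coeff_mul]
  refine Finset.sum_eq_zero ?_
  intro p hp
  rw [Finset.HasAntidiagonal.mem_antidiagonal] at hp
  by_cases hc : c ∣ p.1
  · have h2 : ¬ c ∣ p.2 := fun hd => hv (hp ▸ Nat.dvd_add hc hd)
    rw [hg p.2 h2, mul_zero]
  · rw [hf p.1 hc, zero_mul]

lemma csupp_pow {c : ℕ} {f : R⟦X⟧} (hf : csupp c f) (k : ℕ) : csupp c (f^k) := by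
  induction k with
  | zero => simpa using csupp_one c
  | succ k ih => rw [pow_succ]; exact csupp_mul ih hf

lemma csupp_prod {c : ℕ} {ι : Type*} (s : Finset ι) (f : ι → R⟦X⟧)
    (h : ∀ i ∈ s, csupp c (f i)) : csupp c (∏ i ∈ s, f i) :=
  Finset.prod_induction f (csupp c) (fun _ _ => csupp_mul) (csupp_one c) h

lemma csupp_one_sub_pow' {c e : ℕ} (h : c ∣ e) : csupp c (1 - (X:R⟦X⟧)^e) := by
  intro v hv
  rw [map_sub, PowerSeries.coeff_one, PowerSeries.coeff_X_pow, if_neg, if_neg, sub_zero]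
  · intro hve
    exact hv (hve ▸ h)
  · intro h0
    exact hv (h0 ▸ dvd_zero c)

lemma csupp_weaken {c d : ℕ} {f : R⟦X⟧} (h : csupp c f) (hdc : d ∣ c) : csupp d f := by
  intro v hv
  exact h v (fun hcv => hv (dvd_trans hdc hcv))

lemma csupp_inv {c : ℕ} (f g : R⟦X⟧) (hf : csupp c f) (hfg : f * g = 1) : csupp c g := by
  intro v
  induction v using Nat.strong_induction_on with
  | _ v IH =>
    intro hv
    have hv0 : v ≠ 0 := fun h => hv (h ▸ dvd_zero c)
    have h1 : coeff (R := R) v (f * g) = 0 := by rw [hfg, PowerSeries.coeff_one, if_neg hv0]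
    rw [PowerSeries.coeff_mul] at h1
    have hrest : ∀ p ∈ Finset.HasAntidiagonal.antidiagonal v, p ≠ ((0 : ℕ), v) →
        coeff (R := R) p.1 f * coeff (R := R) p.2 g = 0 := by
      intro p hp hne
      rw [Finset.HasAntidiagonal.mem_antidiagonal] at hp
      have hp1 : p.1 ≠ 0 := by
        intro h0
        apply hne
        have h2 : p.2 = v := by omega
        exact Prod.ext h0 h2
      by_cases hc : c ∣ p.1
      · have h2 : ¬ c ∣ p.2 := fun hd => hv (hp ▸ Nat.dvd_add hc hd)
        rw [IH p.2 (by omega) h2, mul_zero]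
      · rw [hf p.1 hc, zero_mul]
    have hgv : coeff (R := R) 0 f * coeff (R := R) v g = 0 := by
      rw [← Finset.sum_eq_single_of_mem ((0:ℕ), v) (by simp) hrest]
      exact h1
    have hconst : constantCoeff (R := R) f * constantCoeff (R := R) g = 1 := by
      have hh := congrArg (constantCoeff (R := R)) hfg
      rwa [map_mul, map_one] at hh
    calc coeff (R := R) v g = (constantCoeff (R := R) f * constantCoeff (R := R) g) * coeff (R := R) v g := by
          rw [hconst, one_mul]
      _ = constantCoeff (R := R) g * (coeff (R := R) 0 f * coeff (R := R) v g) := by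
          rw [PowerSeries.coeff_zero_eq_constantCoeff]
          ring
      _ = 0 := by rw [hgv, mul_zero]

def oneAdd (s : ℕ) (f : R⟦X⟧) : Prop := ∃ w, f = 1 + (X:R⟦X⟧)^s * w

lemma oneAdd_mul {s : ℕ} {f g : R⟦X⟧} : oneAdd s f → oneAdd s g → oneAdd s (f*g) := by
  rintro ⟨u, rfl⟩ ⟨v, rfl⟩
  exact ⟨u + v + X^s*u*v, by ring⟩

lemma oneAdd_one (s : ℕ) : oneAdd s (1 : R⟦X⟧) := ⟨0, by ring⟩

lemma oneAdd_pow {s : ℕ} {f : R⟦X⟧} (h : oneAdd s f) (k : ℕ) : oneAdd s (f^k) := by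
  induction k with
  | zero => simpa using oneAdd_one s
  | succ k ih => rw [pow_succ]; exact oneAdd_mul ih h

lemma oneAdd_of_ge {s t : ℕ} {f : R⟦X⟧} (h : s ≤ t) (hf : oneAdd t f) : oneAdd s f := by
  obtain ⟨w, rfl⟩ := hf
  refine ⟨X^(t-s)*w, ?_⟩
  rw [← mul_assoc, ← pow_add, Nat.add_sub_cancel' h]

lemma oneAdd_inv {s : ℕ} (f g : R⟦X⟧) (hf : oneAdd s f) (hfg : f * g = 1) : oneAdd s g := by
  obtain ⟨w, rfl⟩ := hf
  exact ⟨-(w*g), by linear_combination hfg⟩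

lemma coeff_eq_of_oneAdd (f g : R⟦X⟧) (v s : ℕ) (h : v < s) (hg : oneAdd s g) :
    coeff (R := R) v (f * g) = coeff (R := R) v f := by
  obtain ⟨w, rfl⟩ := hg
  have he : f * (1 + (X:R⟦X⟧)^s*w) = f + X^s*(w*f) := by ring
  rw [he, map_add, coeff_X_pow_mul_zero _ s v h, add_zero]

lemma oneAdd_one_sub_pow {s e : ℕ} (h : s ≤ e) : oneAdd s (1 - (X:R⟦X⟧)^e) := by
  refine ⟨-(X^(e-s)), ?_⟩
  have he : (X:R⟦X⟧)^s * X^(e-s) = X^e := by rw [← pow_add, Nat.add_sub_cancel' h]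
  linear_combination he

/-! ### Units -/

lemma constC_one_sub {e : ℕ} (he : 1 ≤ e) : constantCoeff (R := R) (1 - (X:R⟦X⟧)^e) = 1 := by
  rw [map_sub, map_one, map_pow, PowerSeries.constantCoeff_X, zero_pow (by omega), sub_zero]

lemma constC_one_add {e : ℕ} (he : 1 ≤ e) : constantCoeff (R := R) (1 + (X:R⟦X⟧)^e) = 1 := by
  rw [map_add, map_one, map_pow, PowerSeries.constantCoeff_X, zero_pow (by omega), add_zero]

noncomputable def mkUnit (f : R⟦X⟧) (h : constantCoeff (R := R) f = 1) : (R⟦X⟧)ˣ where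
  val := f
  inv := invOfUnit f 1
  val_inv := mul_invOfUnit f 1 (by simpa using h)
  inv_val := by rw [mul_comm]; exact mul_invOfUnit f 1 (by simpa using h)

noncomputable def uS (e : ℕ) : (R⟦X⟧)ˣ :=
  if h : 1 ≤ e then mkUnit (1 - (X:R⟦X⟧)^e) (constC_one_sub h) else 1

noncomputable def uP (e : ℕ) : (R⟦X⟧)ˣ :=
  if h : 1 ≤ e then mkUnit (1 + (X:R⟦X⟧)^e) (constC_one_add h) else 1

lemma uS_val {e : ℕ} (he : 1 ≤ e) : ((uS e : (R⟦X⟧)ˣ) : R⟦X⟧) = 1 - (X:R⟦X⟧)^e := by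
  rw [uS, dif_pos he]
  rfl

lemma uP_val {e : ℕ} (he : 1 ≤ e) : ((uP e : (R⟦X⟧)ˣ) : R⟦X⟧) = 1 + (X:R⟦X⟧)^e := by
  rw [uP, dif_pos he]
  rfl

lemma pow9 {A : Type*} [CommRing A] (h9 : (9:A) = 0) (z : A) : (1-z)^9 = (1-z^3)^3 := by
  linear_combination (-z + 4*z^2 - 9*z^3 + 14*z^4 - 14*z^5 + 9*z^6 - 4*z^7 + z^8) * h9

lemma key9 {A : Type*} [CommRing A] (h9 : (9:A) = 0) (x : A) :
    (1-x^2)^8 * (1-x^9)^3 * (1+x) = (1-x^6)^3 * (1-x)^26 := by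
  have h1 := pow9 h9 x
  have h2 := pow9 h9 (x^2)
  have h3 := pow9 h9 (x^3)
  have e1 : (1-x^9)^3 = (1-x)^27 := by
    rw [show x^9 = (x^3)^3 by ring, ← h3, show (1-x^3)^9 = ((1-x^3)^3)^3 by ring, ← h1]
    ring
  have e2 : (1-x^6)^3 = (1-x^2)^9 := by
    rw [h2, show ((x:A)^2)^3 = x^6 by ring]
  rw [e1, e2]
  have hh : (1-x)*(1+x) = 1 - x^2 := by ring
  linear_combination ((1-x^2)^8*(1-x)^26) * hh

lemma nine_zero (h9 : (9:R) = 0) : (9 : R⟦X⟧) = 0 := by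
  have : ((9:ℕ) : R⟦X⟧) = PowerSeries.C (R := R) ((9:ℕ) : R) := (map_natCast (C (R := R)) 9).symm
  push_cast at this
  rw [this, h9, map_zero]

lemma unit_key (h9 : (9:R) = 0) (i : ℕ) (hi : 1 ≤ i) :
    (uS (2*i))^8 * ((uS i : (R⟦X⟧)ˣ)⁻¹)^25
      = (uS (6*i))^3 * (((uS (9*i))^3)⁻¹) * uS i * (uP i)⁻¹ := by
  have hval : ((uS (2*i) : (R⟦X⟧)ˣ) : R⟦X⟧)^8 * ((uS (9*i) : (R⟦X⟧)ˣ) : R⟦X⟧)^3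
      * ((uP i : (R⟦X⟧)ˣ) : R⟦X⟧)
      = ((uS (6*i) : (R⟦X⟧)ˣ) : R⟦X⟧)^3 * ((uS i : (R⟦X⟧)ˣ) : R⟦X⟧)^26 := by
    rw [uS_val (by omega), uS_val (by omega), uS_val (by omega), uS_val hi, uP_val hi]
    have hk := key9 (nine_zero h9) ((X:R⟦X⟧)^i)
    rw [show ((X:R⟦X⟧)^i)^2 = X^(2*i) by rw [← pow_mul, Nat.mul_comm],
        show ((X:R⟦X⟧)^i)^9 = X^(9*i) by rw [← pow_mul, Nat.mul_comm],
        show ((X:R⟦X⟧)^i)^6 = X^(6*i) by rw [← pow_mul, Nat.mul_comm]] at hk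
    exact hk
  have hU : (uS (2*i) : (R⟦X⟧)ˣ)^8 * (uS (9*i))^3 * uP i = (uS (6*i))^3 * (uS i)^26 := by
    apply Units.ext
    simp only [Units.val_mul, Units.val_pow_eq_pow_val]
    exact hval
  have key : ((uS (2*i) : (R⟦X⟧)ˣ)^8) * ((uS (9*i))^3 * uP i)
      = ((uS (6*i))^3 * uS i) * (uS i)^25 := by
    rw [← mul_assoc, hU, mul_assoc, ← pow_succ']
  calc (uS (2*i) : (R⟦X⟧)ˣ)^8 * ((uS i : (R⟦X⟧)ˣ)⁻¹)^25
      = (uS (2*i) : (R⟦X⟧)ˣ)^8 / (uS i)^25 := by rw [inv_pow, div_eq_mul_inv]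
    _ = ((uS (2*i) : (R⟦X⟧)ˣ)^8 * ((uS (9*i))^3 * uP i))
        / ((uS i)^25 * ((uS (9*i))^3 * uP i)) := by rw [mul_div_mul_right_eq_div]
    _ = (((uS (6*i))^3 * uS i) * (uS i)^25) / ((uS i)^25 * ((uS (9*i))^3 * uP i)) := by
        rw [key]
    _ = (((uS (6*i))^3 * uS i) * (uS i)^25) / (((uS (9*i))^3 * uP i) * (uS i)^25) := by
        rw [mul_comm ((uS i : (R⟦X⟧)ˣ)^25) ((uS (9*i))^3 * uP i)]
    _ = ((uS (6*i))^3 * uS i) / ((uS (9*i))^3 * uP i) := by rw [mul_div_mul_right_eq_div]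
    _ = (uS (6*i))^3 * (((uS (9*i))^3)⁻¹) * uS i * (uP i)⁻¹ := by
        rw [div_eq_mul_inv, mul_inv, ← mul_assoc,
          mul_right_comm ((uS (6*i) : (R⟦X⟧)ˣ)^3) (uS i) (((uS (9*i))^3)⁻¹)]

lemma prod_Icc_splitM {M : Type*} [CommMonoid M] (f : ℕ → M) (b m : ℕ) (h : b ≤ m) :
    ∏ i ∈ Icc 1 m, f i = (∏ i ∈ Icc 1 b, f i) * ∏ i ∈ Icc (b+1) m, f i := by
  classical
  have hset : Icc 1 m = Icc 1 b ∪ Icc (b+1) m := by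
    ext z
    simp only [mem_Icc, mem_union]
    omega
  have hdisj : Disjoint (Icc 1 b) (Icc (b+1) m) := by
    rw [Finset.disjoint_left]
    intro z hz1 hz2
    simp only [mem_Icc] at hz1 hz2
    omega
  rw [hset, Finset.prod_union hdisj]

lemma prod_parity {M : Type*} [CommMonoid M] (f : ℕ → M) (N : ℕ) :
    ∏ i ∈ Icc 1 (2*N), f i = (∏ i ∈ Icc 1 N, f (2*i)) * ∏ i ∈ Icc 1 N, f (2*i-1) := by
  induction N with
  | zero => simp
  | succ N ih =>
    rw [show 2*(N+1) = (2*N+1)+1 by ring, Finset.prod_Icc_succ_top (by omega),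
      Finset.prod_Icc_succ_top (by omega), ih,
      Finset.prod_Icc_succ_top (show 1 ≤ N+1 by omega) (fun i => f (2*i)),
      Finset.prod_Icc_succ_top (show 1 ≤ N+1 by omega) (fun i => f (2*i-1)),
      show 2*(N+1) = 2*N+1+1 by ring, show 2*N+1+1-1 = 2*N+1 by omega]
    rw [mul_assoc, mul_comm (f (2*N+1)) (f (2*N+1+1))]
    exact mul_mul_mul_comm _ _ _ _

lemma val_prodU {R : Type*} [CommRing R] (s : Finset ℕ) (f : ℕ → (R⟦X⟧)ˣ) :
    ((∏ i ∈ s, f i : (R⟦X⟧)ˣ) : R⟦X⟧) = ∏ i ∈ s, ((f i : R⟦X⟧)) := by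
  rw [← Units.coeHom_apply, map_prod]
  rfl
lemma inv_unique {R : Type*} [CommRing R] (f g h : R⟦X⟧) (hg : f * g = 1) (hh : f * h = 1) :
    g = h := by
  calc g = g * (f * h) := by rw [hh, mul_one]
    _ = h * (f * g) := by ring
    _ = h := by rw [hg, mul_one]

lemma master_units {R : Type*} [CommRing R] (h9 : (9:R) = 0) (N : ℕ) :
    (∏ i ∈ Icc 1 (2*N), ((uS (2*i))^8 * (((uS i : (R⟦X⟧)ˣ))⁻¹)^25))
      = (∏ i ∈ Icc 1 (2*N), (uS (6*i) : (R⟦X⟧)ˣ))^3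
        * (((∏ i ∈ Icc 1 (2*N), (uS (9*i) : (R⟦X⟧)ˣ))^3)⁻¹)
        * ((∏ i ∈ Icc 1 N, (uS (2*i-1) : (R⟦X⟧)ˣ))^2
           * (∏ i ∈ Icc 1 (2*N), (uS (2*i) : (R⟦X⟧)ˣ))
           * (((∏ i ∈ Icc (N+1) (2*N), (uS (2*i) : (R⟦X⟧)ˣ))⁻¹)^2)) := by
  rw [Finset.prod_congr rfl (fun i hi => unit_key h9 i (by rw [mem_Icc] at hi; omega))]
  rw [Finset.prod_mul_distrib, Finset.prod_mul_distrib, Finset.prod_mul_distrib,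
      Finset.prod_pow, Finset.prod_inv_distrib, Finset.prod_pow, Finset.prod_inv_distrib]
  set PO : (R⟦X⟧)ˣ := ∏ i ∈ Icc 1 N, uS (2*i-1) with hPOdef
  set PE : (R⟦X⟧)ˣ := ∏ i ∈ Icc 1 N, uS (2*i) with hPEdef
  set PE2 : (R⟦X⟧)ˣ := ∏ i ∈ Icc 1 (2*N), uS (2*i) with hPE2def
  set PU : (R⟦X⟧)ˣ := ∏ i ∈ Icc 1 (2*N), uS i with hPUdef
  set PP : (R⟦X⟧)ˣ := ∏ i ∈ Icc 1 (2*N), uP i with hPPdef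
  set P6 : (R⟦X⟧)ˣ := ∏ i ∈ Icc 1 (2*N), uS (6*i) with hP6def
  set P9 : (R⟦X⟧)ˣ := ∏ i ∈ Icc 1 (2*N), uS (9*i) with hP9def
  set T : (R⟦X⟧)ˣ := ∏ i ∈ Icc (N+1) (2*N), uS (2*i) with hTdef
  have hPOval : (PO : R⟦X⟧) = ∏ i ∈ Icc 1 N, (1 - (X:R⟦X⟧)^(2*i-1)) := by
    rw [hPOdef, val_prodU]
    exact Finset.prod_congr rfl fun i hi => uS_val (by rw [mem_Icc] at hi; omega)
  have hPEval : (PE : R⟦X⟧) = ∏ i ∈ Icc 1 N, (1 - (X:R⟦X⟧)^(2*i)) := by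
    rw [hPEdef, val_prodU]
    exact Finset.prod_congr rfl fun i hi => uS_val (by rw [mem_Icc] at hi; omega)
  have hPE2val : (PE2 : R⟦X⟧) = ∏ i ∈ Icc 1 (2*N), (1 - (X:R⟦X⟧)^(2*i)) := by
    rw [hPE2def, val_prodU]
    exact Finset.prod_congr rfl fun i hi => uS_val (by rw [mem_Icc] at hi; omega)
  have hPUval : (PU : R⟦X⟧) = ∏ i ∈ Icc 1 (2*N), (1 - (X:R⟦X⟧)^i) := by
    rw [hPUdef, val_prodU]
    exact Finset.prod_congr rfl fun i hi => uS_val (by rw [mem_Icc] at hi; omega)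
  have hPPval : (PP : R⟦X⟧) = ∏ i ∈ Icc 1 (2*N), (1 + (X:R⟦X⟧)^i) := by
    rw [hPPdef, val_prodU]
    exact Finset.prod_congr rfl fun i hi => uP_val (by rw [mem_Icc] at hi; omega)
  have hTval : (T : R⟦X⟧) = ∏ i ∈ Icc (N+1) (2*N), (1 - (X:R⟦X⟧)^(2*i)) := by
    rw [hTdef, val_prodU]
    exact Finset.prod_congr rfl fun i hi => uS_val (by rw [mem_Icc] at hi; omega)
  have r4' : ∏ i ∈ Icc 1 (2*N), (1 - (X:R⟦X⟧)^(2*i))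
      = (∏ i ∈ Icc 1 N, (1 - (X:R⟦X⟧)^(2*i))) * ∏ i ∈ Icc (N+1) (2*N), (1 - (X:R⟦X⟧)^(2*i)) :=
    prod_Icc_splitM _ N (2*N) (by omega)
  have r5' : ∏ i ∈ Icc 1 (2*N), (1 - (X:R⟦X⟧)^i)
      = (∏ i ∈ Icc 1 N, (1 - (X:R⟦X⟧)^(2*i))) * ∏ i ∈ Icc 1 N, (1 - (X:R⟦X⟧)^(2*i-1)) :=
    prod_parity (fun i => 1 - (X:R⟦X⟧)^i) N
  have r1' : (∏ i ∈ Icc 1 (2*N), (1 - (X:R⟦X⟧)^i)) * (∏ i ∈ Icc 1 (2*N), (1 + (X:R⟦X⟧)^i))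
      = ∏ i ∈ Icc 1 (2*N), (1 - (X:R⟦X⟧)^(2*i)) := by
    rw [← Finset.prod_mul_distrib]
    refine Finset.prod_congr rfl ?_
    intro i hi
    have hxx : (X:R⟦X⟧)^i * X^i = X^(2*i) := by rw [← pow_add]; congr 1; omega
    linear_combination -hxx
  have hT : T = PO * PP := by
    have hv : ((T * PE : (R⟦X⟧)ˣ) : R⟦X⟧) = ((PO * PP * PE : (R⟦X⟧)ˣ) : R⟦X⟧) := by
      simp only [Units.val_mul]
      rw [hTval, hPEval, hPOval, hPPval]
      linear_combination (-1 : R⟦X⟧) * r4' - r1'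
        + (∏ i ∈ Icc 1 (2*N), (1 + (X:R⟦X⟧)^i)) * r5'
    exact mul_right_cancel (Units.ext hv)
  have hPU : PU = PE * PO := by
    apply Units.ext
    rw [Units.val_mul, hPUval, hPEval, hPOval]
    exact r5'
  have hPE2 : PE2 = PE * T := by
    apply Units.ext
    rw [Units.val_mul, hPE2val, hPEval, hTval]
    exact r4'
  have hcross : PU * T^2 = PO^2 * PE2 * PP := by
    apply Units.ext
    simp only [Units.val_mul, Units.val_pow_eq_pow_val]
    have e1 : (T : R⟦X⟧) = (PO : R⟦X⟧) * PP := by rw [hT, Units.val_mul]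
    have e2 : (PU : R⟦X⟧) = (PE : R⟦X⟧) * PO := by rw [hPU, Units.val_mul]
    have e3 : (PE2 : R⟦X⟧) = (PE : R⟦X⟧) * (T : R⟦X⟧) := by rw [hPE2, Units.val_mul]
    rw [e2, e3, e1]
    ring
  have hmain : PU * PP⁻¹ = PO^2 * PE2 * (T⁻¹)^2 := by
    have hz : (PU * PP⁻¹) * (T^2 * PP) = (PO^2 * PE2 * (T⁻¹)^2) * (T^2 * PP) := by
      calc (PU * PP⁻¹) * (T^2 * PP) = (PU * PP⁻¹) * (PP * T^2) := by rw [mul_comm (T^2) PP]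
        _ = PU * T^2 := by group
        _ = PO^2 * PE2 * PP := hcross
        _ = (PO^2 * PE2 * (T⁻¹)^2) * (T^2 * PP) := by group
    exact mul_right_cancel hz
  rw [mul_assoc (P6^3 * (P9^3)⁻¹) PU PP⁻¹, hmain]
end Assembly
end D8

namespace D8
open Finset PowerSeries

lemma not_square_of_mod (v : ℕ) (h : v % 3 = 2 ∨ v % 9 = 3 ∨ v % 9 = 6) :
    ∀ k : ℕ, v ≠ k*k := by
  intro k hv
  subst hv
  have h39 : (k*k) % 9 % 3 = (k*k) % 3 := Nat.mod_mod_of_dvd _ (by norm_num)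
  have h9 := Nat.mul_mod k k 9
  have hr : k % 9 < 9 := Nat.mod_lt _ (by norm_num)
  set K := k*k with hK
  generalize hg : k % 9 = r at h9 hr
  interval_cases r <;> omega

theorem main9 (N : ℕ) (hN : 2 ≤ N) (hcase : N % 3 = 2 ∨ N % 9 = 3) :
    ((elongatedDiamond 8 N : ℤ) : ZMod 9) = 0 := by
  classical
  have h9 : (9 : ZMod 9) = 0 := by decide
  -- Step 1: cast to `ZMod 9` and rewrite in terms of units
  have hcast : ((elongatedDiamond 8 N : ℤ) : ZMod 9)
      = PowerSeries.coeff (R := ZMod 9) N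
          (((∏ i ∈ Icc 1 N, ((uS (2*i))^8 * (((uS i : ((ZMod 9)⟦X⟧)ˣ))⁻¹)^25))
            : ((ZMod 9)⟦X⟧)ˣ) : (ZMod 9)⟦X⟧) := by
    unfold elongatedDiamond
    rw [show (((PowerSeries.coeff (R := ℤ) N) (∏ i ∈ Finset.Icc 1 N,
        ((1 - (PowerSeries.X : PowerSeries ℤ) ^ (2 * i)) ^ 8 *
        (PowerSeries.invOfUnit (1 - (PowerSeries.X : PowerSeries ℤ) ^ i) 1) ^ (3 * 8 + 1))) : ℤ)
        : ZMod 9)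
      = (Int.castRingHom (ZMod 9)) ((PowerSeries.coeff (R := ℤ) N) (∏ i ∈ Finset.Icc 1 N,
        ((1 - (PowerSeries.X : PowerSeries ℤ) ^ (2 * i)) ^ 8 *
        (PowerSeries.invOfUnit (1 - (PowerSeries.X : PowerSeries ℤ) ^ i) 1) ^ (3 * 8 + 1))))
      from rfl]
    rw [← PowerSeries.coeff_map]
    congr 1
    rw [map_prod, val_prodU]
    refine Finset.prod_congr rfl ?_
    intro i hi
    rw [mem_Icc] at hi
    have hJ : PowerSeries.map (Int.castRingHom (ZMod 9))
        (PowerSeries.invOfUnit (1 - (X:ℤ⟦X⟧)^i) 1)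
        = (((uS i : ((ZMod 9)⟦X⟧)ˣ))⁻¹ : ((ZMod 9)⟦X⟧)ˣ) := by
      apply inv_unique (1 - (X:(ZMod 9)⟦X⟧)^i)
      · have hz : (1 - (X:ℤ⟦X⟧)^i) * PowerSeries.invOfUnit (1 - (X:ℤ⟦X⟧)^i) 1 = 1 :=
          PowerSeries.mul_invOfUnit _ 1 (by simpa using constC_one_sub (R := ℤ) hi.1)
        have hz2 := congrArg (PowerSeries.map (Int.castRingHom (ZMod 9))) hz
        rwa [map_mul, map_sub, map_one, map_pow, PowerSeries.map_X] at hz2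
      · rw [← uS_val hi.1]
        exact (uS i).mul_inv
    rw [map_mul, map_pow, map_pow, map_sub, map_one, map_pow, PowerSeries.map_X, hJ]
    rw [Units.val_mul, Units.val_pow_eq_pow_val, Units.val_pow_eq_pow_val, uS_val (by omega)]
  -- Step 2: stability from N to 2N
  have htail : oneAdd (N+1)
      (((∏ i ∈ Icc (N+1) (2*N), ((uS (2*i))^8 * (((uS i : ((ZMod 9)⟦X⟧)ˣ))⁻¹)^25))
        : ((ZMod 9)⟦X⟧)ˣ) : (ZMod 9)⟦X⟧) := by
    rw [val_prodU]
    refine Finset.prod_induction _ (oneAdd (N+1)) (fun _ _ => oneAdd_mul) (oneAdd_one _) ?_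
    intro i hi
    rw [mem_Icc] at hi
    rw [Units.val_mul, Units.val_pow_eq_pow_val, Units.val_pow_eq_pow_val]
    refine oneAdd_mul (oneAdd_pow ?_ 8) (oneAdd_pow ?_ 25)
    · rw [uS_val (by omega)]
      exact oneAdd_one_sub_pow (by omega)
    · refine oneAdd_inv ((uS i : ((ZMod 9)⟦X⟧)ˣ) : (ZMod 9)⟦X⟧) _ ?_ ((uS i).mul_inv)
      rw [uS_val (by omega)]
      exact oneAdd_one_sub_pow (by omega)
  have hstab : PowerSeries.coeff (R := ZMod 9) N
      (((∏ i ∈ Icc 1 (2*N), ((uS (2*i))^8 * (((uS i : ((ZMod 9)⟦X⟧)ˣ))⁻¹)^25))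
        : ((ZMod 9)⟦X⟧)ˣ) : (ZMod 9)⟦X⟧)
      = PowerSeries.coeff (R := ZMod 9) N
      (((∏ i ∈ Icc 1 N, ((uS (2*i))^8 * (((uS i : ((ZMod 9)⟦X⟧)ˣ))⁻¹)^25))
        : ((ZMod 9)⟦X⟧)ˣ) : (ZMod 9)⟦X⟧) := by
    rw [prod_Icc_splitM (fun i => (uS (2*i))^8 * (((uS i : ((ZMod 9)⟦X⟧)ˣ))⁻¹)^25)
      N (2*N) (by omega), Units.val_mul]
    exact coeff_eq_of_oneAdd _ _ N (N+1) (by omega) htail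
  rw [hcast, ← hstab, master_units h9 N]
  -- Step 3: push values
  simp only [Units.val_mul, Units.val_pow_eq_pow_val]
  have hc6val : ((∏ i ∈ Icc 1 (2*N), (uS (6*i) : ((ZMod 9)⟦X⟧)ˣ) : ((ZMod 9)⟦X⟧)ˣ) : (ZMod 9)⟦X⟧)
      = ∏ i ∈ Icc 1 (2*N), (1 - (X:(ZMod 9)⟦X⟧)^(6*i)) := by
    rw [val_prodU]
    exact Finset.prod_congr rfl fun i hi => uS_val (by rw [mem_Icc] at hi; omega)
  have h9val : ((∏ i ∈ Icc 1 (2*N), (uS (9*i) : ((ZMod 9)⟦X⟧)ˣ) : ((ZMod 9)⟦X⟧)ˣ) : (ZMod 9)⟦X⟧)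
      = ∏ i ∈ Icc 1 (2*N), (1 - (X:(ZMod 9)⟦X⟧)^(9*i)) := by
    rw [val_prodU]
    exact Finset.prod_congr rfl fun i hi => uS_val (by rw [mem_Icc] at hi; omega)
  have hPOval : ((∏ i ∈ Icc 1 N, (uS (2*i-1) : ((ZMod 9)⟦X⟧)ˣ) : ((ZMod 9)⟦X⟧)ˣ) : (ZMod 9)⟦X⟧)
      = ∏ i ∈ Icc 1 N, (1 - (X:(ZMod 9)⟦X⟧)^(2*i-1)) := by
    rw [val_prodU]
    exact Finset.prod_congr rfl fun i hi => uS_val (by rw [mem_Icc] at hi; omega)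
  have hPE2val : ((∏ i ∈ Icc 1 (2*N), (uS (2*i) : ((ZMod 9)⟦X⟧)ˣ) : ((ZMod 9)⟦X⟧)ˣ) : (ZMod 9)⟦X⟧)
      = ∏ i ∈ Icc 1 (2*N), (1 - (X:(ZMod 9)⟦X⟧)^(2*i)) := by
    rw [val_prodU]
    exact Finset.prod_congr rfl fun i hi => uS_val (by rw [mem_Icc] at hi; omega)
  have hTval : ((∏ i ∈ Icc (N+1) (2*N), (uS (2*i) : ((ZMod 9)⟦X⟧)ˣ) : ((ZMod 9)⟦X⟧)ˣ) : (ZMod 9)⟦X⟧)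
      = ∏ i ∈ Icc (N+1) (2*N), (1 - (X:(ZMod 9)⟦X⟧)^(2*i)) := by
    rw [val_prodU]
    exact Finset.prod_congr rfl fun i hi => uS_val (by rw [mem_Icc] at hi; omega)
  rw [hc6val, hPOval, hPE2val]
  set ip9 : (ZMod 9)⟦X⟧ :=
    ((((∏ i ∈ Icc 1 (2*N), (uS (9*i) : ((ZMod 9)⟦X⟧)ˣ))^3)⁻¹ : ((ZMod 9)⟦X⟧)ˣ) : (ZMod 9)⟦X⟧)
    with hip9
  set itv : (ZMod 9)⟦X⟧ :=
    (((∏ i ∈ Icc (N+1) (2*N), (uS (2*i) : ((ZMod 9)⟦X⟧)ˣ))⁻¹ : ((ZMod 9)⟦X⟧)ˣ) : (ZMod 9)⟦X⟧)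
    with hitv
  set c6 : (ZMod 9)⟦X⟧ := (∏ i ∈ Icc 1 (2*N), (1 - (X:(ZMod 9)⟦X⟧)^(6*i)))^3 with hc6
  set gO : (ZMod 9)⟦X⟧ := (∏ i ∈ Icc 1 N, (1 - (X:(ZMod 9)⟦X⟧)^(2*i-1)))^2 with hgO
  set gE : (ZMod 9)⟦X⟧ := ∏ i ∈ Icc 1 (2*N), (1 - (X:(ZMod 9)⟦X⟧)^(2*i)) with hgE
  have harr : c6 * ip9 * (gO * gE * itv^2) = ((c6 * ip9) * (gO * gE)) * itv^2 := by ring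
  rw [harr]
  -- drop the tail
  have hit : oneAdd (2*N+2) itv := by
    refine oneAdd_inv
      ((∏ i ∈ Icc (N+1) (2*N), (uS (2*i) : ((ZMod 9)⟦X⟧)ˣ) : ((ZMod 9)⟦X⟧)ˣ) : (ZMod 9)⟦X⟧)
      _ ?_ ((∏ i ∈ Icc (N+1) (2*N), (uS (2*i) : ((ZMod 9)⟦X⟧)ˣ)).mul_inv)
    rw [hTval]
    refine Finset.prod_induction _ (oneAdd (2*N+2)) (fun _ _ => oneAdd_mul) (oneAdd_one _) ?_
    intro i hi
    rw [mem_Icc] at hi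
    exact oneAdd_one_sub_pow (by omega)
  rw [coeff_eq_of_oneAdd _ _ N (2*N+2) (by omega) (oneAdd_pow hit 2)]
  -- support facts
  have hd9 : csupp 9 ip9 := by
    refine csupp_inv
      ((((∏ i ∈ Icc 1 (2*N), (uS (9*i) : ((ZMod 9)⟦X⟧)ˣ))^3 : ((ZMod 9)⟦X⟧)ˣ)) : (ZMod 9)⟦X⟧)
      _ ?_ ?_
    · rw [Units.val_pow_eq_pow_val, h9val]
      refine csupp_pow (csupp_prod _ _ ?_) 3
      intro i _
      exact csupp_one_sub_pow' (dvd_mul_right 9 i)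
    · exact ((∏ i ∈ Icc 1 (2*N), (uS (9*i) : ((ZMod 9)⟦X⟧)ˣ))^3).mul_inv
  have hc6supp : csupp 6 c6 := by
    rw [hc6]
    refine csupp_pow (csupp_prod _ _ ?_) 3
    intro i _
    exact csupp_one_sub_pow' (dvd_mul_right 6 i)
  have hCD : csupp 3 (c6 * ip9) :=
    csupp_mul (csupp_weaken hc6supp (by norm_num)) (csupp_weaken hd9 (by norm_num))
  -- coefficientwise vanishing
  rw [PowerSeries.coeff_mul]
  refine Finset.sum_eq_zero ?_
  intro p hp
  rw [Finset.HasAntidiagonal.mem_antidiagonal] at hp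
  by_cases h3u : 3 ∣ p.1
  · -- the Gauss/Jacobi part
    have hgauss : ∀ hvv : p.2 % 3 = 2 ∨ p.2 % 9 = 3 ∨ p.2 % 9 = 6,
        PowerSeries.coeff (R := ZMod 9) p.2 (gO * gE) = 0 := by
      intro hvv
      rw [hgO, hgE, ← Finset.prod_pow]
      exact gauss_coeff_zero N p.2 (by omega) (not_square_of_mod p.2 hvv)
    rcases hcase with hc | hc
    · rw [hgauss (Or.inl (by omega)), mul_zero]
    · by_cases h9v : 9 ∣ p.2
      · have hu9 : p.1 % 9 = 3 := by omega
        have hCDz : PowerSeries.coeff (R := ZMod 9) p.1 (c6 * ip9) = 0 := by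
          rw [PowerSeries.coeff_mul]
          refine Finset.sum_eq_zero ?_
          intro q hq
          rw [Finset.HasAntidiagonal.mem_antidiagonal] at hq
          by_cases h9b : 9 ∣ q.2
          · by_cases h6a : 6 ∣ q.1
            · obtain ⟨e, he⟩ := h6a
              have he3 : e % 3 = 2 := by omega
              have hjz : PowerSeries.coeff (R := ZMod 9) q.1 c6 = 0 := by
                rw [hc6, ← Finset.prod_pow, he]
                exact jacobi_coeff_zero (2*N) e (by omega) (by omega) he3
              rw [hjz, zero_mul]
            · have : PowerSeries.coeff (R := ZMod 9) q.1 c6 = 0 := hc6supp q.1 h6a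
              rw [this, zero_mul]
          · rw [hd9 q.2 h9b, mul_zero]
        rw [hCDz, zero_mul]
      · rw [hgauss (by omega), mul_zero]
  · rw [hCD p.1 h3u, zero_mul]

end D8

theorem d8_mod9 (n : ℕ) :
    (9 : ℤ) ∣ elongatedDiamond 8 (3 * n + 2) ∧
    (9 : ℤ) ∣ elongatedDiamond 8 (9 * n + 3) := by
  constructor
  · exact (ZMod.intCast_zmod_eq_zero_iff_dvd _ 9).mp
      (D8.main9 (3*n+2) (by omega) (Or.inl (by omega)))
  · exact (ZMod.intCast_zmod_eq_zero_iff_dvd _ 9).mp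
      (D8.main9 (9*n+3) (by omega) (Or.inr (by omega)))
end
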